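/- arXiv:2111.02490 — 9 statements merged into one kernel-verified Lean document; each statement's English description precedes it below -/
import Mathlib

section
/- Let 𝒜 be an additive category admitting countable products and countable coproducts, and let M be an object of 𝒜 such that the diagonal morphism diag : M → ∏_{n∈ℕ} M factors through the canonical comparison morphism ⊕_{n∈ℕ} M → ∏_{n∈ℕ} M. Then for every compact object K of 𝒜, every morphism K → M is zero, i.e. Hom_𝒜(K, M) = 0. -/
/-!
`⊕_ℕ M` is the filtered colimit of its finite subcoproducts, so a morphism from a compact object
`K` into it factors through some `⊕_{i ∈ S} M` with `S` finite. Apply this to `f ≫ t`, where `t`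
splits the diagonal through the comparison map, and project to a coordinate `n ∉ S`: the
projection kills `⊕_{i ∈ S} M`, while `f ≫ t ≫ coprodToProd M ≫ π_n = f`.
-/

open CategoryTheory Limits

universe v u

noncomputable section

variable {𝒜 : Type u} [Category.{v} 𝒜] [Preadditive 𝒜]
  [HasCountableProducts 𝒜] [HasCountableCoproducts 𝒜]

/-- The canonical comparison morphism `⊕_ℕ M ⟶ ∏_ℕ M`. -/
def coprodToProd (M : 𝒜) : (∐ fun _ : ℕ => M) ⟶ ∏ᶜ fun _ : ℕ => M :=
  Sigma.desc fun i => Pi.lift fun j => if i = j then 𝟙 M else 0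

universe w

namespace CategoryTheory.Limits.CoproductsFromFiniteFiltered

/-- Unlike `isColimitFiniteSubproductsCocone`, this needs no colimits of shape
`Finset (Discrete α)`. -/
def isColimitFiniteSubcoproductsCoconeOfHasFiniteCoproducts {C : Type*} [Category C]
    [HasFiniteCoproducts C] {α : Type*} (f : α → C) [HasCoproduct f] :
    IsColimit (finiteSubcoproductsCocone f) where
  desc s := Sigma.desc fun a =>
    Sigma.ι (fun x : ({Discrete.mk a} : Finset (Discrete α)) => (Discrete.functor f).obj x.1)
      ⟨⟨a⟩, Finset.mem_singleton_self _⟩ ≫ s.ι.app {Discrete.mk a}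
  fac s S := by
    refine Sigma.hom_ext _ _ fun ⟨⟨a⟩, ha⟩ => ?_
    have hle : ({Discrete.mk a} : Finset (Discrete α)) ⟶ S := homOfLE (by simpa using ha)
    erw [Sigma.ι_desc_assoc, Sigma.ι_desc, ← s.w hle, ← Category.assoc]
    congr 1
    erw [Sigma.ι_desc]
  uniq s m hm := by
    refine Sigma.hom_ext _ _ fun a => ?_
    erw [Sigma.ι_desc, ← hm, ← Category.assoc]
    congr 1
    erw [Sigma.ι_desc]

theorem exists_comp_finiteSubcoproductsCocone_ι_app_eq {C : Type*} [Category.{v} C]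
    [HasFiniteCoproducts C] {α : Type w} (f : α → C) [HasCoproduct f] (K : C)
    [PreservesFilteredColimitsOfSize.{w, w} (coyoneda.obj (Opposite.op K))] (g : K ⟶ ∐ f) :
    ∃ S, ∃ h : K ⟶ (liftToFinsetObj (Discrete.functor f)).obj S,
      h ≫ (finiteSubcoproductsCocone f).ι.app S = g :=
  Types.jointly_surjective_of_isColimit
    (isColimitOfPreserves (coyoneda.obj (Opposite.op K))
      (isColimitFiniteSubcoproductsCoconeOfHasFiniteCoproducts f)) g

end CategoryTheory.Limits.CoproductsFromFiniteFiltered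

open CoproductsFromFiniteFiltered

theorem ι_coprodToProd_π (M : 𝒜) (i j : ℕ) :
    Sigma.ι _ i ≫ coprodToProd M ≫ Pi.π _ j = if i = j then 𝟙 M else 0 := by
  simp [coprodToProd]

theorem finiteSubcoproductsCocone_ι_app_comp_coprodToProd_π {M : 𝒜} {S : Finset (Discrete ℕ)}
    {n : ℕ} (hn : Discrete.mk n ∉ S) :
    (finiteSubcoproductsCocone fun _ : ℕ => M).ι.app S ≫ coprodToProd M ≫ Pi.π _ n = 0 := by
  refine Sigma.hom_ext _ _ fun ⟨⟨i⟩, hi⟩ => ?_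
  have hin : i ≠ n := by rintro rfl; exact hn hi
  erw [Sigma.ι_desc_assoc, ι_coprodToProd_π, if_neg hin, comp_zero]

theorem statement0 (M : 𝒜)
    (hfact : ∃ t : M ⟶ ∐ fun _ : ℕ => M,
      t ≫ coprodToProd M = Pi.lift fun _ : ℕ => 𝟙 M)
    (K : 𝒜)
    [PreservesFilteredColimitsOfSize.{v, v} (coyoneda.obj (Opposite.op K))]
    (f : K ⟶ M) : f = 0 := by
  obtain ⟨t, ht⟩ := hfact
  have := preservesSmallestFilteredColimits_of_preservesFilteredColimits
    (coyoneda.obj (Opposite.op K))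
  obtain ⟨S, g, hg⟩ := exists_comp_finiteSubcoproductsCocone_ι_app_eq _ K (f ≫ t)
  obtain ⟨n, hn⟩ := (S.image Discrete.as).exists_notMem
  have hnS : Discrete.mk n ∉ S := fun h => hn (Finset.mem_image_of_mem _ h)
  calc f = f ≫ t ≫ coprodToProd M ≫ Pi.π _ n := by simp [reassoc_of% ht]
    _ = (g ≫ (finiteSubcoproductsCocone fun _ : ℕ => M).ι.app S) ≫
          coprodToProd M ≫ Pi.π _ n := by
      rw [hg]; exact (Category.assoc _ _ _).symm
    _ = 0 := by
      erw [Category.assoc, finiteSubcoproductsCocone_ι_app_comp_coprodToProd_π hnS, comp_zero]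

end
end

section
/- Let C be a category and W a class of morphisms of C. In the category Fun^W(ℕ,C), the class of morphisms 𝒱 := { v^k_C : C → T^{k,*}C ∣ k ∈ ℕ, C ∈ Fun^W(ℕ,C) } contains all identities, is closed under composition, and satisfies a Gabriel–Zisman left calculus of fractions: (left Ore) for every s : X → Y in 𝒱 and every morphism u : X → Z there exist t : Z → W' in 𝒱 and v : Y → W' with t ∘ u = v ∘ s; (left cancellation) for parallel morphisms f, g : X → Y and s : X' → X in 𝒱 with f ∘ s = g ∘ s, there exists t : Y → Y' in 𝒱 with t ∘ f = t ∘ g. -/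
/-! The maps `v^k` are natural in the sequence, which gives the Ore condition with `t = v^k_Z`, and they
compose as `v^k ≫ v^l = v^{k+l}`. For cancellation, naturality of `f : T^{k,*}X' ⟶ Y` shows that
the component of `f ≫ v^k_Y` at `n` is the component of `v^k_{X'} ≫ f` at `n + k`, so
`v^k ≫ f = v^k ≫ g` forces `f ≫ v^k = g ≫ v^k`. -/

open CategoryTheory

universe v u

namespace ShiftCat

variable {C : Type u} [Category.{v} C] (W : MorphismProperty C)

/-- `Fun^W(ℕ,C)`: functors `ℕ ⥤ C` all of whose consecutive structure maps lie in `W`. -/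
abbrev WSeq := ObjectProperty.FullSubcategory (fun F : ℕ ⥤ C => ∀ n : ℕ, W (F.map (homOfLE (Nat.le_succ n))))

variable {W}

lemma natHom_eq {a b : ℕ} (f g : a ⟶ b) : f = g := Subsingleton.elim f g

/-- The shift `T^{k,*}` by `k` on objects: precomposition with the `k`-th power of the
successor functor `T`. -/
def shObj (k : ℕ) (F : WSeq W) : WSeq W where
  obj :=
    { obj := fun n => F.obj.obj (n + k)
      map := fun {a b} f => F.obj.map (homOfLE (Nat.add_le_add_right (leOfHom f) k))
      map_id := fun n =>
        (congrArg F.obj.map (natHom_eq _ (𝟙 (n + k)))).trans (F.obj.map_id _)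
      map_comp := fun {a b c} f g =>
        (congrArg F.obj.map (natHom_eq _ (homOfLE (Nat.add_le_add_right (leOfHom f) k) ≫
          homOfLE (Nat.add_le_add_right (leOfHom g) k)))).trans (F.obj.map_comp _ _) }
  property := fun n => by
    have h : ∀ {x y : ℕ} (p : x ≤ y), y = x + 1 → W (F.obj.map (homOfLE p)) := by
      intro x y p hy
      subst hy
      exact F.property x
    exact h _ (by omega)

/-- The `k`-fold iterate `v^k_F : F ⟶ T^{k,*}F` of the canonical natural transformation
`v : id ⟶ T^*`; its component at `n` is the structure map `F(n) ⟶ F(n+k)`. -/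
def vpow (k : ℕ) (F : WSeq W) : F ⟶ shObj k F where
  hom :=
  { app n := F.obj.map (homOfLE (Nat.le_add_right n k))
    naturality a b f := by
      show F.obj.map _ ≫ F.obj.map _ = F.obj.map _ ≫ F.obj.map _
      rw [← F.obj.map_comp, ← F.obj.map_comp]
      exact congrArg F.obj.map (natHom_eq _ _) }

variable (W)

/-- The class `𝒱 = { v^k_C ∣ k ∈ ℕ, C ∈ Fun^W(ℕ,C) }`. -/
def Vclass : MorphismProperty (WSeq W) :=
  fun X Y f => ∃ (k : ℕ) (h : shObj k X = Y), f = vpow k X ≫ eqToHom h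

section

lemma map_homOfLE_eq_eqToHom_comp {P : Type*} [Preorder P] (F : P ⥤ C) {a b a' b' : P}
    (p : a ≤ b) (p' : a' ≤ b') (ha : a = a') (hb : b' = b) :
    F.map (homOfLE p) =
      eqToHom (congrArg F.obj ha) ≫ F.map (homOfLE p') ≫ eqToHom (congrArg F.obj hb) := by
  subst ha hb
  simp

variable {W}

lemma eqToHom_hom_app {X Y : WSeq W} (h : X = Y) (n : ℕ) :
    (eqToHom h).hom.app n = eqToHom (congrArg (fun Z : WSeq W => Z.obj.obj n) h) := by
  subst h
  rfl

lemma vpow_zero (X : WSeq W) : vpow 0 X = 𝟙 X := by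
  apply ObjectProperty.hom_ext
  ext n
  exact (congrArg X.obj.map (natHom_eq _ (𝟙 n))).trans (X.obj.map_id n)

lemma shObj_add (k l : ℕ) (X : WSeq W) : shObj (k + l) X = shObj l (shObj k X) := by
  have hobj (n : ℕ) : n + (k + l) = n + l + k := by omega
  apply ObjectProperty.FullSubcategory.ext
  refine CategoryTheory.Functor.ext (fun n => ?_) (fun a b _ => ?_)
  · exact congrArg X.obj.obj (hobj n)
  · exact map_homOfLE_eq_eqToHom_comp X.obj _ _ (hobj a) (hobj b).symm

lemma vpow_comp_vpow (k l : ℕ) (X : WSeq W) :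
    vpow k X ≫ vpow l (shObj k X) = vpow (k + l) X ≫ eqToHom (shObj_add k l X) := by
  apply ObjectProperty.hom_ext
  ext n
  have hn : n + (k + l) = n + l + k := by omega
  change X.obj.map _ ≫ X.obj.map _ = X.obj.map _ ≫ (eqToHom (shObj_add k l X)).hom.app n
  rw [← X.obj.map_comp, eqToHom_hom_app]
  exact (congrArg X.obj.map (natHom_eq _ _)).trans
    ((map_homOfLE_eq_eqToHom_comp X.obj (by omega : n ≤ n + l + k) _ rfl hn).trans
      (Category.id_comp _))

/-- `T^{k,*}` on morphisms. -/
def shMap (k : ℕ) {X Z : WSeq W} (u : X ⟶ Z) : shObj k X ⟶ shObj k Z where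
  hom :=
    { app n := u.hom.app (n + k)
      naturality _ _ f := u.hom.naturality (homOfLE (Nat.add_le_add_right (leOfHom f) k)) }

lemma vpow_naturality (k : ℕ) {X Z : WSeq W} (u : X ⟶ Z) :
    u ≫ vpow k Z = vpow k X ≫ shMap k u := by
  apply ObjectProperty.hom_ext
  ext n
  exact (u.hom.naturality (homOfLE (Nat.le_add_right n k))).symm

lemma comp_vpow_hom_app (k : ℕ) {X Y : WSeq W} (f : shObj k X ⟶ Y) (n : ℕ) :
    (f ≫ vpow k Y).hom.app n = (vpow k X ≫ f).hom.app (n + k) :=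
  (f.hom.naturality (homOfLE (Nat.le_add_right n k))).symm

lemma vclass_vpow (k : ℕ) (X : WSeq W) : Vclass W (vpow k X) :=
  ⟨k, rfl, (Category.comp_id _).symm⟩

instance : (Vclass W).IsMultiplicative where
  id_mem X := vpow_zero X ▸ vclass_vpow 0 X
  comp_mem := by
    rintro X _ _ _ _ ⟨k, rfl, rfl⟩ ⟨l, rfl, rfl⟩
    exact ⟨k + l, shObj_add k l X, by simpa using vpow_comp_vpow k l X⟩

instance : (Vclass W).HasLeftCalculusOfFractions where
  exists_leftFraction := by
    rintro _ Z ⟨s, ⟨k, rfl, rfl⟩, u⟩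
    refine ⟨⟨shMap k u, vpow k Z, vclass_vpow k Z⟩, ?_⟩
    simpa using vpow_naturality k u
  ext := by
    rintro X _ Y f g _ ⟨k, rfl, rfl⟩ hfg
    refine ⟨shObj k Y, vpow k Y, vclass_vpow k Y, ?_⟩
    apply ObjectProperty.hom_ext
    ext n
    simp only [eqToHom_refl, Category.comp_id] at hfg
    rw [comp_vpow_hom_app, comp_vpow_hom_app, hfg]

end

theorem statement2 :
    -- 𝒱 contains all identities
    (∀ X : WSeq W, Vclass W (𝟙 X)) ∧
    -- 𝒱 is closed under composition
    (∀ (X Y Z : WSeq W) (f : X ⟶ Y) (g : Y ⟶ Z),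
      Vclass W f → Vclass W g → Vclass W (f ≫ g)) ∧
    -- left Ore condition
    (∀ (X Y Z : WSeq W) (s : X ⟶ Y) (u : X ⟶ Z), Vclass W s →
      ∃ (W' : WSeq W) (t : Z ⟶ W') (v : Y ⟶ W'), Vclass W t ∧ u ≫ t = s ≫ v) ∧
    -- left cancellation
    (∀ (X Y X' : WSeq W) (f g : X ⟶ Y) (s : X' ⟶ X), Vclass W s →
      s ≫ f = s ≫ g → ∃ (Y' : WSeq W) (t : Y ⟶ Y'), Vclass W t ∧ f ≫ t = g ≫ t) := by
  refine ⟨(Vclass W).id_mem, fun _ _ _ => (Vclass W).comp_mem, ?_, ?_⟩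
  · intro X Y Z s u hs
    obtain ⟨ψ, hψ⟩ := MorphismProperty.HasLeftCalculusOfFractions.exists_leftFraction
      (MorphismProperty.RightFraction.mk s hs u)
    exact ⟨ψ.Y', ψ.s, ψ.f, ψ.hs, hψ⟩
  · intro X Y X' f g s hs hfg
    obtain ⟨Y', t, ht, hft⟩ := MorphismProperty.HasLeftCalculusOfFractions.ext f g s hs hfg
    exact ⟨Y', t, ht, hft⟩

end ShiftCat
end

section
/- Let (Γ,Z) be a homotopy coherent action of a group G on a topological space Z, and let X be its strictification with equivalence classes written [g_k,t_k,…,g_0,z]. Then: (a) g·[g_k,t_k,…,g_0,z] := [g g_k,t_k,…,g_0,z] is a well-defined continuous action of G on X by homeomorphisms; (b) R([g_k,t_k,…,g_0,z]) := Γ(g_k,t_k,…,g_0,z) is a well-defined continuous map R : X → Z with R([e,z]) = z for all z ∈ Z; (c) H([g_k,t_k,…,g_0,z],u) := [e,u,g_k,t_k,…,g_0,z] is a well-defined continuous map H : X × [0,1] → X satisfying H(x,1) = x, H(x,0) = [e,R(x)] and H([e,z],u) = [e,z] for all x ∈ X, z ∈ Z, u ∈ [0,1]; in particular H exhibits the image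 of z ↦ [e,z] as a strong deformation retract of X; (d) R(H(x,u)) = R(x) for all x ∈ X and u ∈ [0,1]. -/
open unitInterval

universe u v

/-- A homotopy coherent action of a group `G` on a topological space `Z`.

A point of the `k`-th summand `(G × [0,1])^k × G × Z` of the domain of `Γ` is encoded by the
data `(k, gs, ts, z)` where `gs n = g_n` for `n ≤ k` and `ts n = t_n` for `1 ≤ n ≤ k` (the
values of `gs` and `ts` outside these ranges are irrelevant by the field `junk`).  Continuity
of `Γ` is expressed, equivalently, as continuity in `(t,z)` for each fixed tuple of group
elements.  The remaining fields are the coherence conditions. -/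
structure HCAction (G : Type u) [Group G] (Z : Type v) [TopologicalSpace Z] where
  Γ : ℕ → (ℕ → G) → (ℕ → I) → Z → Z
  continuous : ∀ (k : ℕ) (gs : ℕ → G), Continuous fun p : (ℕ → I) × Z => Γ k gs p.1 p.2
  junk : ∀ (k : ℕ) (gs gs' : ℕ → G) (ts ts' : ℕ → I) (z : Z),
    (∀ n ≤ k, gs n = gs' n) → (∀ n, 1 ≤ n → n ≤ k → ts n = ts' n) →
    Γ k gs ts z = Γ k gs' ts' z
  rel_t0 : ∀ (k j : ℕ) (gs : ℕ → G) (ts : ℕ → I) (z : Z), 1 ≤ j → j ≤ k → ts j = 0 →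
    Γ k gs ts z = Γ (k - j) (fun n => gs (n + j)) (fun n => ts (n + j)) (Γ (j - 1) gs ts z)
  rel_t1 : ∀ (k j : ℕ) (gs : ℕ → G) (ts : ℕ → I) (z : Z), 1 ≤ j → j ≤ k → ts j = 1 →
    Γ k gs ts z =
      Γ (k - 1)
        (fun n => if n < j - 1 then gs n else if n = j - 1 then gs j * gs (j - 1) else gs (n + 1))
        (fun n => if n ≤ j - 1 then ts n else ts (n + 1)) z
  rel_g0 : ∀ (k : ℕ) (gs : ℕ → G) (ts : ℕ → I) (z : Z), 1 ≤ k → gs 0 = 1 →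
    Γ k gs ts z = Γ (k - 1) (fun n => gs (n + 1)) (fun n => ts (n + 1)) z
  rel_gj : ∀ (k j : ℕ) (gs : ℕ → G) (ts : ℕ → I) (z : Z), 1 ≤ j → j ≤ k - 1 → gs j = 1 →
    Γ k gs ts z =
      Γ (k - 1) (fun n => if n < j then gs n else gs (n + 1))
        (fun n => if n < j then ts n else if n = j then ts (j + 1) * ts j else ts (n + 1)) z
  rel_gk : ∀ (k : ℕ) (gs : ℕ → G) (ts : ℕ → I) (z : Z), 1 ≤ k → gs k = 1 →
    Γ k gs ts z = Γ (k - 1) gs ts z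
  unit : ∀ (gs : ℕ → G) (ts : ℕ → I) (z : Z), gs 0 = 1 → Γ 0 gs ts z = z

namespace HCAction

variable {G : Type u} [Group G] [TopologicalSpace G] [DiscreteTopology G]
variable {Z : Type v} [TopologicalSpace Z]

/-- The space of words `(g_k, t_k, …, g_0, z)` (with junk tails). -/
abbrev Word (G : Type u) (Z : Type v) := ℕ × (ℕ → G) × (ℕ → I) × Z

open Classical in
/-- The relations generating the equivalence relation defining the strictification. -/
inductive SRel (A : HCAction G Z) : Word G Z → Word G Z → Prop
  | junk (k : ℕ) (gs gs' : ℕ → G) (ts ts' : ℕ → I) (z : Z) :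
      (∀ n ≤ k, gs n = gs' n) → (∀ n, 1 ≤ n → n ≤ k → ts n = ts' n) →
      SRel A (k, gs, ts, z) (k, gs', ts', z)
  | g0 (k : ℕ) (gs : ℕ → G) (ts : ℕ → I) (z : Z) : 1 ≤ k → gs 0 = 1 →
      SRel A (k, gs, ts, z) (k - 1, fun n => gs (n + 1), fun n => ts (n + 1), z)
  | gj (k j : ℕ) (gs : ℕ → G) (ts : ℕ → I) (z : Z) : 1 ≤ j → j ≤ k - 1 → gs j = 1 →
      SRel A (k, gs, ts, z)
        (k - 1, fun n => if n < j then gs n else gs (n + 1),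
          fun n => if n < j then ts n else if n = j then ts (j + 1) * ts j else ts (n + 1), z)
  | t1 (k j : ℕ) (gs : ℕ → G) (ts : ℕ → I) (z : Z) : 1 ≤ j → j ≤ k → ts j = 1 →
      SRel A (k, gs, ts, z)
        (k - 1,
          fun n => if n < j - 1 then gs n else if n = j - 1 then gs j * gs (j - 1) else gs (n + 1),
          fun n => if n ≤ j - 1 then ts n else ts (n + 1), z)
  | t0 (k j : ℕ) (gs : ℕ → G) (ts : ℕ → I) (z : Z) : 1 ≤ j → j ≤ k → ts j = 0 →
      SRel A (k, gs, ts, z)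
        (k - j, fun n => gs (n + j), fun n => ts (n + j), A.Γ (j - 1) gs ts z)

/-- The strictification of a homotopy coherent action: the quotient of the word space by the
equivalence relation generated by `SRel`, with the quotient topology. -/
def Strict (A : HCAction G Z) : Type (max u v) := Quot (SRel A)

instance (A : HCAction G Z) : TopologicalSpace (Strict A) :=
  instTopologicalSpaceQuot

/-- The class of a word in the strictification. -/
def wmk (A : HCAction G Z) (w : Word G Z) : Strict A := Quot.mk _ w

/-- The canonical embedding `Z → X`, `z ↦ [e, z]`. -/
def emb (A : HCAction G Z) (z : Z) : Strict A := wmk A (0, fun _ => 1, fun _ => 0, z)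

end HCAction

namespace HCAction
variable {G : Type u} [Group G] [TopologicalSpace G] [DiscreteTopology G]
variable {Z : Type v} [TopologicalSpace Z]

set_option linter.unusedSectionVars false
set_option linter.unnecessarySeqFocus false
set_option linter.unreachableTactic false
set_option linter.unusedTactic false

lemma wmk_junk (A : HCAction G Z) {k : ℕ} {gs gs' : ℕ → G} {ts ts' : ℕ → I} {z : Z}
    (hg : ∀ n ≤ k, gs n = gs' n) (ht : ∀ n, 1 ≤ n → n ≤ k → ts n = ts' n) :
    wmk A (k, gs, ts, z) = wmk A (k, gs', ts', z) :=
  Quot.sound (SRel.junk k gs gs' ts ts' z hg ht)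

def actW (g : G) (w : Word G Z) : Word G Z :=
  (w.1, Function.update w.2.1 w.1 (g * w.2.1 w.1), w.2.2.1, w.2.2.2)

def hW (w : Word G Z) (u : I) : Word G Z :=
  (w.1 + 1, fun n => if n = w.1 + 1 then 1 else w.2.1 n,
    fun n => if n = w.1 + 1 then u else w.2.2.1 n, w.2.2.2)

lemma srel_act (A : HCAction G Z) (g : G) : ∀ w w' : Word G Z, SRel A w w' →
    wmk A (actW g w) = wmk A (actW g w') := by
  rintro w w' h
  induction h with
  | junk k gs gs' ts ts' z hg ht =>
      refine wmk_junk A (fun n hn => ?_) ht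
      simp only [Function.update_apply]
      split_ifs with h1
      · rw [hg k le_rfl]
      · exact hg n hn
  | g0 k gs ts z hk h0 =>
      have h0' : Function.update gs k (g * gs k) 0 = 1 := by
        rw [Function.update_apply, if_neg (by omega : ¬ (0 = k)), h0]
      refine (Quot.sound (SRel.g0 k _ ts z hk h0')).trans
        (wmk_junk A (fun n hn => ?_) (fun n _ _ => rfl))
      simp only [Function.update_apply]
      split_ifs
      all_goals first
        | rfl
        | omega
        | (exfalso; omega)
        | (congr 1 <;> omega)
        | (congr 1 <;> first | rfl | omega | (congr 1 <;> omega))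
  | gj k j gs ts z h1 h2 h3 =>
      have h3' : Function.update gs k (g * gs k) j = 1 := by
        rw [Function.update_apply, if_neg (by omega : ¬ (j = k)), h3]
      refine (Quot.sound (SRel.gj k j _ ts z h1 h2 h3')).trans
        (wmk_junk A (fun n hn => ?_) (fun n _ _ => rfl))
      simp only [Function.update_apply]
      split_ifs
      all_goals first
        | rfl
        | omega
        | (exfalso; omega)
        | (congr 1 <;> omega)
        | (congr 1 <;> first | rfl | omega | (congr 1 <;> omega))
  | t1 k j gs ts z h1 h2 h3 =>
      refine (Quot.sound (SRel.t1 k j (Function.update gs k (g * gs k)) ts z h1 h2 h3)).trans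
        (wmk_junk A (fun n hn => ?_) (fun n _ _ => rfl))
      simp only [Function.update_apply]
      rcases eq_or_lt_of_le h2 with hjk | hjk
      · subst hjk
        split_ifs
        all_goals first
          | rfl
          | omega
          | (exfalso; omega)
          | (rw [mul_assoc])
          | (congr 1 <;> omega)
          | (congr 1 <;> first | rfl | omega | (congr 1 <;> omega))
          | (rw [mul_assoc]; congr 2 <;> first | rfl | omega | (congr 1 <;> omega))
      · split_ifs
        all_goals first
          | rfl
          | omega
          | (exfalso; omega)
          | (congr 1 <;> omega)
          | (congr 1 <;> first | rfl | omega | (congr 1 <;> omega))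
  | t0 k j gs ts z h1 h2 h3 =>
      refine (Quot.sound (SRel.t0 k j (Function.update gs k (g * gs k)) ts z h1 h2 h3)).trans
        ?_
      have hz : A.Γ (j - 1) (Function.update gs k (g * gs k)) ts z = A.Γ (j - 1) gs ts z :=
        A.junk _ _ _ _ _ _ (fun n hn => Function.update_of_ne (by omega) _ _) (fun _ _ _ => rfl)
      rw [hz]
      refine wmk_junk A (fun n hn => ?_) (fun n _ _ => rfl)
      simp only [Function.update_apply]
      split_ifs
      all_goals first
        | rfl
        | omega
        | (exfalso; omega)
        | (congr 1 <;> omega)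
        | (congr 1 <;> first | rfl | omega | (congr 1 <;> omega))

lemma srel_R (A : HCAction G Z) : ∀ w w' : Word G Z, SRel A w w' →
    A.Γ w.1 w.2.1 w.2.2.1 w.2.2.2 = A.Γ w'.1 w'.2.1 w'.2.2.1 w'.2.2.2 := by
  rintro w w' h
  induction h with
  | junk k gs gs' ts ts' z hg ht => exact A.junk k gs gs' ts ts' z hg ht
  | g0 k gs ts z hk h0 => exact A.rel_g0 k gs ts z hk h0
  | gj k j gs ts z h1 h2 h3 => exact A.rel_gj k j gs ts z h1 h2 h3
  | t1 k j gs ts z h1 h2 h3 => exact A.rel_t1 k j gs ts z h1 h2 h3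
  | t0 k j gs ts z h1 h2 h3 => exact A.rel_t0 k j gs ts z h1 h2 h3

lemma srel_h (A : HCAction G Z) (u : I) : ∀ w w' : Word G Z, SRel A w w' →
    wmk A (hW w u) = wmk A (hW w' u) := by
  rintro w w' h
  induction h with
  | junk k gs gs' ts ts' z hg ht =>
      refine wmk_junk A (fun n hn => ?_) (fun n h1n hn => ?_)
      · try simp only []
        split_ifs with h
        · rfl
        · exact hg n (by omega)
      · try simp only []
        split_ifs with h
        · rfl
        · exact ht n h1n (by omega)
  | g0 k gs ts z hk h0 =>
      have e : k - 1 + 1 = k := by omega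
      have h0' : (fun n => if n = k + 1 then (1:G) else gs n) 0 = 1 := by
        try simp only []
        rw [if_neg (by omega)]; exact h0
      refine (Quot.sound (SRel.g0 (A := A) (k+1)
          (fun n => if n = k + 1 then 1 else gs n)
          (fun n => if n = k + 1 then u else ts n) z (by omega) h0')).trans ?_
      simp only [hW, Nat.add_sub_cancel]
      rw [e]
      refine wmk_junk A (fun n hn => ?_) (fun n h1n hn => ?_) <;>
        · try simp only []
          split_ifs
          all_goals first
            | rfl
            | (exfalso; omega)
            | (congr 1 <;> omega)
  | gj k j gs ts z h1 h2 h3 =>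
      have e : k - 1 + 1 = k := by omega
      have h3' : (fun n => if n = k + 1 then (1:G) else gs n) j = 1 := by
        try simp only []
        rw [if_neg (by omega)]; exact h3
      refine (Quot.sound (SRel.gj (A := A) (k+1) j
          (fun n => if n = k + 1 then 1 else gs n)
          (fun n => if n = k + 1 then u else ts n) z h1 (by omega) h3')).trans ?_
      simp only [hW, Nat.add_sub_cancel]
      rw [e]
      refine wmk_junk A (fun n hn => ?_) (fun n h1n hn => ?_) <;>
        · try simp only []
          split_ifs
          all_goals first
            | rfl
            | (exfalso; omega)
            | (congr 1 <;> omega)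
  | t1 k j gs ts z h1 h2 h3 =>
      have e : k - 1 + 1 = k := by omega
      have h3' : (fun n => if n = k + 1 then u else ts n) j = 1 := by
        try simp only []
        rw [if_neg (by omega)]; exact h3
      refine (Quot.sound (SRel.t1 (A := A) (k+1) j
          (fun n => if n = k + 1 then 1 else gs n)
          (fun n => if n = k + 1 then u else ts n) z h1 (by omega) h3')).trans ?_
      simp only [hW, Nat.add_sub_cancel]
      rw [e]
      refine wmk_junk A (fun n hn => ?_) (fun n h1n hn => ?_) <;>
        · try simp only []
          split_ifs
          all_goals first
            | rfl
            | (exfalso; omega)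
            | (congr 1 <;> omega)
            | (congr 1 <;> first | rfl | omega | (congr 1 <;> omega))
  | t0 k j gs ts z h1 h2 h3 =>
      have h3' : (fun n => if n = k + 1 then u else ts n) j = 0 := by
        try simp only []
        rw [if_neg (by omega)]; exact h3
      refine (Quot.sound (SRel.t0 (A := A) (k+1) j
          (fun n => if n = k + 1 then 1 else gs n)
          (fun n => if n = k + 1 then u else ts n) z h1 (by omega) h3')).trans ?_
      have hz : A.Γ (j - 1) (fun n => if n = k + 1 then (1:G) else gs n)
          (fun n => if n = k + 1 then u else ts n) z = A.Γ (j - 1) gs ts z := by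
        refine A.junk _ _ _ _ _ _ (fun n hn => ?_) (fun n h1n hn => ?_) <;>
          · try simp only []
            rw [if_neg (by omega)]
      rw [hz]
      simp only [hW]
      have e2 : k + 1 - j = k - j + 1 := by omega
      rw [e2]
      refine wmk_junk A (fun n hn => ?_) (fun n h1n hn => ?_) <;>
        · try simp only []
          split_ifs
          all_goals first
            | rfl
            | (exfalso; omega)
            | (congr 1 <;> omega)

lemma h_one (A : HCAction G Z) (k : ℕ) (gs : ℕ → G) (ts : ℕ → I) (z : Z) :
    wmk A (hW (k, gs, ts, z) 1) = wmk A (k, gs, ts, z) := by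
  have h3' : (fun n => if n = k + 1 then (1:I) else ts n) (k+1) = 1 := by simp
  refine (Quot.sound (SRel.t1 (A := A) (k+1) (k+1)
      (fun n => if n = k + 1 then 1 else gs n)
      (fun n => if n = k + 1 then 1 else ts n) z (by omega) le_rfl h3')).trans ?_
  simp only [Nat.add_sub_cancel]
  refine wmk_junk A (fun n hn => ?_) (fun n h1n hn => ?_)
  · try simp only []
    split_ifs
    all_goals first
      | rfl
      | (exfalso; omega)
      | (congr 1 <;> omega)
      | (rw [one_mul]; congr 1 <;> omega)
      | (rw [one_mul])
  · try simp only []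
    split_ifs
    all_goals first
      | rfl
      | (exfalso; omega)

lemma h_zero (A : HCAction G Z) (k : ℕ) (gs : ℕ → G) (ts : ℕ → I) (z : Z) :
    wmk A (hW (k, gs, ts, z) 0) = emb A (A.Γ k gs ts z) := by
  have h3' : (fun n => if n = k + 1 then (0:I) else ts n) (k+1) = 0 := by simp
  refine (Quot.sound (SRel.t0 (A := A) (k+1) (k+1)
      (fun n => if n = k + 1 then 1 else gs n)
      (fun n => if n = k + 1 then 0 else ts n) z (by omega) le_rfl h3')).trans ?_
  have hz : A.Γ (k + 1 - 1) (fun n => if n = k + 1 then (1:G) else gs n)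
      (fun n => if n = k + 1 then (0:I) else ts n) z = A.Γ k gs ts z := by
    simp only [Nat.add_sub_cancel]
    refine A.junk _ _ _ _ _ _ (fun n hn => ?_) (fun n h1n hn => ?_) <;>
      · try simp only []
        rw [if_neg (by omega)]
  rw [hz]
  have e : k + 1 - (k + 1) = 0 := by omega
  rw [e]
  refine wmk_junk A (fun n hn => ?_) (fun n h1n hn => absurd hn (by omega))
  have hn0 : n = 0 := by omega
  subst hn0
  simp

lemma h_emb (A : HCAction G Z) (z : Z) (u : I) :
    wmk A (hW ((0, fun _ => 1, fun _ => 0, z) : Word G Z) u) = emb A z := by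
  refine (Quot.sound (SRel.g0 (A := A) 1
      (fun n => if n = 0 + 1 then 1 else 1)
      (fun n => if n = 0 + 1 then u else 0) z le_rfl (by simp))).trans ?_
  exact wmk_junk A (fun n hn => by simp) (fun n h1n hn => absurd hn (by omega))

lemma gammaH (A : HCAction G Z) (k : ℕ) (gs : ℕ → G) (ts : ℕ → I) (z : Z) (u : I) :
    A.Γ (k+1) (fun n => if n = k + 1 then 1 else gs n)
      (fun n => if n = k + 1 then u else ts n) z = A.Γ k gs ts z := by
  rw [A.rel_gk (k+1) _ _ z (by omega) (by simp)]
  simp only [Nat.add_sub_cancel]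
  refine A.junk _ _ _ _ _ _ (fun n hn => ?_) (fun n h1n hn => ?_) <;>
    · try simp only []
      rw [if_neg (by omega)]

lemma cont_fiber {X : Type*} [TopologicalSpace X] (f : Word G Z → X)
    (F : ℕ → ((ℕ → G) × (ℕ → I) × Z) → X)
    (hF : ∀ k, Continuous (F k))
    (hf : ∀ w : Word G Z, f w = F w.1 w.2) : Continuous f := by
  rw [continuous_iff_continuousAt]
  rintro ⟨k, r⟩
  have hopen : IsOpen {w : Word G Z | w.1 = k} :=
    (isOpen_discrete ({k} : Set ℕ)).preimage continuous_fst
  have hmem : {w : Word G Z | w.1 = k} ∈ nhds ((k, r) : Word G Z) := hopen.mem_nhds rfl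
  refine ContinuousAt.congr (((hF k).comp continuous_snd).continuousAt) ?_
  filter_upwards [hmem] with w hw
  simp only [Function.comp_apply]
  rw [hf w, hw]

lemma cont_fiber2 {X : Type*} [TopologicalSpace X] (f : Word G Z × I → X)
    (F : ℕ → (((ℕ → G) × (ℕ → I) × Z) × I) → X)
    (hF : ∀ k, Continuous (F k))
    (hf : ∀ p : Word G Z × I, f p = F p.1.1 (p.1.2, p.2)) : Continuous f := by
  rw [continuous_iff_continuousAt]
  rintro ⟨⟨k, r⟩, u⟩
  have hopen : IsOpen {p : Word G Z × I | p.1.1 = k} :=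
    (isOpen_discrete ({k} : Set ℕ)).preimage (continuous_fst.fst)
  have hmem : {p : Word G Z × I | p.1.1 = k} ∈ nhds (((k, r), u) : Word G Z × I) :=
    hopen.mem_nhds rfl
  refine ContinuousAt.congr (((hF k).comp
    ((continuous_fst.snd).prodMk continuous_snd)).continuousAt) ?_
  filter_upwards [hmem] with p hp
  simp only [Function.comp_apply]
  rw [hf p, hp]

lemma cont_gamma (A : HCAction G Z) :
    Continuous (fun w : Word G Z => A.Γ w.1 w.2.1 w.2.2.1 w.2.2.2) := by
  refine cont_fiber _ (fun k r => A.Γ k r.1 r.2.1 r.2.2) (fun k => ?_) (fun w => rfl)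
  rw [continuous_iff_continuousAt]
  rintro ⟨gs, rest⟩
  have hopen : IsOpen {r : (ℕ → G) × (ℕ → I) × Z | ∀ n ≤ k, r.1 n = gs n} := by
    have he : {r : (ℕ → G) × (ℕ → I) × Z | ∀ n ≤ k, r.1 n = gs n}
        = Prod.fst ⁻¹' Set.pi (Set.Iic k) (fun n => {gs n}) := by
      ext r
      simp [Set.mem_pi, Set.mem_Iic]
    rw [he]
    exact ((isOpen_set_pi (Set.finite_Iic k) (fun n _ => isOpen_discrete _))).preimage
      continuous_fst
  have hmem : {r : (ℕ → G) × (ℕ → I) × Z | ∀ n ≤ k, r.1 n = gs n}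
      ∈ nhds ((gs, rest) : (ℕ → G) × (ℕ → I) × Z) := hopen.mem_nhds (fun n hn => rfl)
  refine ContinuousAt.congr (((A.continuous k gs).comp
    ((continuous_fst.comp continuous_snd).prodMk
      (continuous_snd.comp continuous_snd))).continuousAt) ?_
  filter_upwards [hmem] with r hr
  simp only [Function.comp_apply]
  exact A.junk k gs r.1 r.2.1 r.2.1 r.2.2 (fun n hn => (hr n hn).symm) (fun _ _ _ => rfl)

lemma cont_actW (g : G) : Continuous (fun w : Word G Z => actW g w) := by
  refine cont_fiber _
    (fun k r => ((k, Function.update r.1 k (g * r.1 k), r.2.1, r.2.2) : Word G Z))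
    (fun k => ?_) (fun w => rfl)
  refine continuous_const.prodMk (Continuous.prodMk ?_
    ((continuous_fst.comp continuous_snd).prodMk (continuous_snd.comp continuous_snd)))
  refine continuous_pi fun n => ?_
  simp only [Function.update_apply]
  by_cases h : n = k
  · simp only [h, if_pos rfl]
    exact continuous_of_discreteTopology.comp ((continuous_apply k).comp continuous_fst)
  · simp only [if_neg h]
    exact (continuous_apply n).comp continuous_fst

lemma cont_hW (A : HCAction G Z) :
    Continuous (fun p : Word G Z × I => wmk A (hW p.1 p.2)) := by
  refine cont_fiber2 _
    (fun k q => wmk A ((k + 1, fun n => if n = k + 1 then 1 else q.1.1 n,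
      fun n => if n = k + 1 then q.2 else q.1.2.1 n, q.1.2.2) : Word G Z))
    (fun k => ?_) (fun p => rfl)
  refine continuous_quot_mk.comp ?_
  refine continuous_const.prodMk (Continuous.prodMk ?_ (Continuous.prodMk ?_
    (continuous_snd.comp (continuous_snd.comp continuous_fst))))
  · refine continuous_pi fun n => ?_
    by_cases h : n = k + 1
    · simp only [h, if_pos rfl]; exact continuous_const
    · simp only [if_neg h]
      exact (continuous_apply n).comp (continuous_fst.comp continuous_fst)
  · refine continuous_pi fun n => ?_
    by_cases h : n = k + 1
    · simp only [h, if_pos rfl]; exact continuous_snd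
    · simp only [if_neg h]
      exact (continuous_apply n).comp
        (continuous_fst.comp (continuous_snd.comp continuous_fst))

/-- The action on the strictification. -/
def actF (A : HCAction G Z) (g : G) : Strict A → Strict A :=
  Quot.lift (fun w => wmk A (actW g w)) (srel_act A g)

/-- The retraction. -/
def RF (A : HCAction G Z) : Strict A → Z :=
  Quot.lift (fun w => A.Γ w.1 w.2.1 w.2.2.1 w.2.2.2) (srel_R A)

/-- The homotopy, curried form. -/
def HcF (A : HCAction G Z) : Strict A → C(I, Strict A) :=
  Quot.lift (fun w => ⟨fun u => wmk A (hW w u), by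
      refine continuous_quot_mk.comp ?_
      refine continuous_const.prodMk (Continuous.prodMk continuous_const
        (Continuous.prodMk ?_ continuous_const))
      refine continuous_pi fun n => ?_
      by_cases h : n = w.1 + 1
      · simp only [h, if_pos rfl]; exact continuous_id
      · simp only [if_neg h]; exact continuous_const⟩)
    (fun w w' h => ContinuousMap.ext fun u => srel_h A u w w' h)

/-- The homotopy. -/
def HF (A : HCAction G Z) : Strict A × I → Strict A :=
  fun p => HcF A p.1 p.2

lemma cont_HcF (A : HCAction G Z) : Continuous (HcF A) := by
  refine continuous_quot_lift _ ?_
  refine ContinuousMap.continuous_of_continuous_uncurry _ ?_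
  exact cont_hW A

lemma cont_HF (A : HCAction G Z) : Continuous (HF A) :=
  continuous_eval.comp (((cont_HcF A).comp continuous_fst).prodMk continuous_snd)

lemma actF_mul (A : HCAction G Z) (g h : G) : actF A (g * h) = actF A g ∘ actF A h := by
  funext x
  induction x using Quot.ind with
  | _ w =>
    obtain ⟨k, gs, ts, z⟩ := w
    show wmk A (actW (g * h) (k, gs, ts, z)) = wmk A (actW g (actW h (k, gs, ts, z)))
    apply congrArg
    simp only [actW, Function.update_self, Function.update_idem, mul_assoc]

lemma actF_one (A : HCAction G Z) : actF A 1 = id := by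
  funext x
  induction x using Quot.ind with
  | _ w =>
    obtain ⟨k, gs, ts, z⟩ := w
    show wmk A (actW 1 (k, gs, ts, z)) = wmk A (k, gs, ts, z)
    apply congrArg
    simp only [actW, one_mul, Function.update_eq_self]

lemma cont_actF (A : HCAction G Z) (g : G) : Continuous (actF A g) :=
  continuous_quot_lift _ (continuous_quot_mk.comp (cont_actW g))

lemma homeo_actF (A : HCAction G Z) (g : G) : IsHomeomorph (actF A g) := by
  have key : ∀ a b : G, ∀ x, actF A a (actF A b x) = actF A (a * b) x := by
    intro a b x
    rw [actF_mul]
    rfl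
  let e : Strict A ≃ₜ Strict A :=
    { toFun := actF A g
      invFun := actF A g⁻¹
      left_inv := fun x => by
        rw [key g⁻¹ g x, inv_mul_cancel, actF_one]; rfl
      right_inv := fun x => by
        rw [key g g⁻¹ x, mul_inv_cancel, actF_one]; rfl
      continuous_toFun := cont_actF A g
      continuous_invFun := cont_actF A g⁻¹ }
  exact e.isHomeomorph

end HCAction

namespace HCAction

/-- the strictification `X` of a homotopy coherent action `(Γ,Z)` carries
(a) a well-defined continuous `G`-action by homeomorphisms `g·[g_k,…,g_0,z] = [g g_k,…,g_0,z]`,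
(b) a well-defined continuous retraction `R : X → Z`, `R[g_k,…,g_0,z] = Γ(g_k,…,g_0,z)`,
with `R [e,z] = z`,
(c) a well-defined continuous homotopy `H : X × [0,1] → X`,
`H([g_k,…,g_0,z],u) = [e,u,g_k,…,g_0,z]`, with `H(x,1) = x`, `H(x,0) = [e,R(x)]` and
`H([e,z],u) = [e,z]`, and
(d) `R(H(x,u)) = R(x)` for all `x` and `u`. -/
theorem statement5 {G : Type u} [Group G] [TopologicalSpace G] [DiscreteTopology G]
    {Z : Type v} [TopologicalSpace Z] (A : HCAction G Z) :
    ∃ (act : G → Strict A → Strict A) (R : Strict A → Z)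
      (H : Strict A × I → Strict A),
      -- (a)
      ((∀ (g : G) (k : ℕ) (gs : ℕ → G) (ts : ℕ → I) (z : Z),
          act g (wmk A (k, gs, ts, z)) = wmk A (k, Function.update gs k (g * gs k), ts, z)) ∧
        (act 1 = id) ∧ (∀ g h : G, act (g * h) = act g ∘ act h) ∧
        (∀ g : G, Continuous (act g)) ∧ (∀ g : G, IsHomeomorph (act g))) ∧
      -- (b)
      ((∀ (k : ℕ) (gs : ℕ → G) (ts : ℕ → I) (z : Z),
          R (wmk A (k, gs, ts, z)) = A.Γ k gs ts z) ∧
        Continuous R ∧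
        (∀ (gs : ℕ → G) (ts : ℕ → I) (z : Z), gs 0 = 1 → R (wmk A (0, gs, ts, z)) = z)) ∧
      -- (c)
      ((∀ (k : ℕ) (gs : ℕ → G) (ts : ℕ → I) (z : Z) (u : I),
          H (wmk A (k, gs, ts, z), u) =
            wmk A (k + 1, fun n => if n = k + 1 then 1 else gs n,
              fun n => if n = k + 1 then u else ts n, z)) ∧
        Continuous H ∧
        (∀ x : Strict A, H (x, 1) = x) ∧
        (∀ x : Strict A, H (x, 0) = emb A (R x)) ∧
        (∀ (z : Z) (u : I), H (emb A z, u) = emb A z)) ∧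
      -- (d)
      (∀ (x : Strict A) (u : I), R (H (x, u)) = R x) := by
  refine ⟨actF A, RF A, HF A,
    ⟨fun g k gs ts z => rfl, actF_one A, fun g h => actF_mul A g h,
      fun g => cont_actF A g, fun g => homeo_actF A g⟩,
    ⟨fun k gs ts z => rfl, continuous_quot_lift _ (cont_gamma A),
      fun gs ts z h => A.unit gs ts z h⟩,
    ⟨fun k gs ts z u => rfl, cont_HF A, ?_, ?_, fun z u => h_emb A z u⟩, ?_⟩
  · intro x
    induction x using Quot.ind with
    | _ w =>
      obtain ⟨k, gs, ts, z⟩ := w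
      exact h_one A k gs ts z
  · intro x
    induction x using Quot.ind with
    | _ w =>
      obtain ⟨k, gs, ts, z⟩ := w
      exact h_zero A k gs ts z
  · intro x u
    induction x using Quot.ind with
    | _ w =>
      obtain ⟨k, gs, ts, z⟩ := w
      exact gammaH A k gs ts z u

end HCAction
end

section
/- Let G be a group with a finite symmetric generating set S containing the identity. For each n ∈ ℕ let (Γ_n,Z_n) be a homotopy coherent G-action, let X_n be its strictification with retraction R_n : X_n → Z_n and filtration (Y_{n,l})_{l∈ℕ} associated to S, let (W_n,d_n) be a metric space with an isometric G-action, and let f_n : Z_n → W_n be a map. Define f(g,x) := g·f_n(R_n(g⁻¹·x)) for g ∈ G and x ∈ X_n. Assume that for all k ∈ ℕ and all g_0,…,g_k ∈ G one has sup_{(t_1,…,t_k)∈[0,1]^k, z∈Z_n} d_n(f_n(Γ_n(g_k,t_k,…,t_1,g_0,z)), g_k⋯g_0·f_n(z)) → 0 as n → ∞. Then for all g,g' ∈ G and every l ∈ ℕ, sup_{y∈Y_{n,l}} d_n(f(g,y), f(g',y)) → 0 as n → ∞. -/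
open unitInterval

universe u v

namespace HCAction

open Pointwise

variable {G : Type u} [Group G] [TopologicalSpace G] [DiscreteTopology G]
variable {Z : Type v} [TopologicalSpace Z]

/-- The filtration `Y_l = {[e, t_k, g_{k-1}, …, g_0, z] : k ≤ l, g_i ∈ S^l}` of the
strictification associated to a generating set `S`. -/
def Yfil (A : HCAction G Z) (S : Set G) (l : ℕ) : Set (Strict A) :=
  {x | ∃ (k : ℕ) (gs : ℕ → G) (ts : ℕ → I) (z : Z),
    k ≤ l ∧ gs k = 1 ∧ (∀ n < k, gs n ∈ S ^ l) ∧ x = wmk A (k, gs, ts, z)}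


end HCAction

namespace HCAction

open Pointwise

variable {G : Type u} [Group G] [TopologicalSpace G] [DiscreteTopology G]

/-- The product `g_k ⋯ g_1 g_0` of the group entries of a word. -/
def chainProd (k : ℕ) (gs : ℕ → G) : G :=
  (((List.range (k + 1)).map gs).reverse).prod

theorem statement7 (S : Set G) (hSfin : S.Finite)
    (hS1 : (1 : G) ∈ S) (hSsymm : S⁻¹ = S) (hSgen : Subgroup.closure S = ⊤)
    (Z : ℕ → Type v) [∀ n, TopologicalSpace (Z n)]
    (A : ∀ n, HCAction G (Z n))
    -- the G-actions on the strictifications X_n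
    (act : ∀ n, G → Strict (A n) → Strict (A n))
    (hact : ∀ (n : ℕ) (g : G) (k : ℕ) (gs : ℕ → G) (ts : ℕ → I) (z : Z n),
      act n g (wmk (A n) (k, gs, ts, z)) =
        wmk (A n) (k, Function.update gs k (g * gs k), ts, z))
    -- the retractions R_n : X_n → Z_n
    (R : ∀ n, Strict (A n) → Z n)
    (hR : ∀ (n k : ℕ) (gs : ℕ → G) (ts : ℕ → I) (z : Z n),
      R n (wmk (A n) (k, gs, ts, z)) = (A n).Γ k gs ts z)
    -- metric spaces with isometric G-actions
    (W : ℕ → Type w) [∀ n, MetricSpace (W n)] [∀ n, MulAction G (W n)]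
    (hiso : ∀ (n : ℕ) (g : G) (w w' : W n), dist (g • w) (g • w') = dist w w')
    -- the maps f_n : Z_n → W_n
    (f : ∀ n, Z n → W n)
    -- hypothesis: sup_{t,z} d(f_n(Γ_n(g_k,t_k,…,t_1,g_0,z)), g_k⋯g_0 · f_n(z)) → 0
    (hconv : ∀ (k : ℕ) (gs : ℕ → G), ∀ ε > (0 : ℝ), ∃ N : ℕ, ∀ n ≥ N,
      ∀ (ts : ℕ → I) (z : Z n),
        dist (f n ((A n).Γ k gs ts z)) (chainProd k gs • f n z) ≤ ε) :
    -- conclusion, with f(g,x) := g · f_n(R_n(g⁻¹ · x)):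
    ∀ (g g' : G) (l : ℕ), ∀ ε > (0 : ℝ), ∃ N : ℕ, ∀ n ≥ N, ∀ y ∈ Yfil (A n) S l,
      dist (g • f n (R n (act n g⁻¹ y))) (g' • f n (R n (act n g'⁻¹ y))) ≤ ε := by
  classical
  intro g g' l ε hε
  choose N0 hN0 using fun k (gs : ℕ → G) => hconv k gs (ε / 2) (by linarith)
  have hSl : ∀ m : ℕ, (S ^ m).Finite := by
    intro m
    induction m with
    | zero => simpa using Set.finite_one
    | succ m ih => rw [pow_succ]; exact ih.mul hSfin
  set T : Set G := insert (1 : G) (S ^ l) with hT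
  have hTfin : T.Finite := (hSl l).insert 1
  set H : Set (ℕ → G) := {h | (∀ m, h m ∈ T) ∧ ∀ m, l ≤ m → h m = 1} with hHdef
  have hHfin : H.Finite := by
    have hinj : Set.InjOn (fun h : ℕ → G => fun i : Fin l => h i) H := by
      intro h₁ hm₁ h₂ hm₂ he
      funext m
      by_cases hml : m < l
      · exact congrFun he ⟨m, hml⟩
      · rw [hm₁.2 m (le_of_not_gt hml), hm₂.2 m (le_of_not_gt hml)]
    refine Set.Finite.of_finite_image
      (Set.Finite.subset (Set.Finite.pi fun _ : Fin l => hTfin) ?_) hinj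
    rintro x ⟨h, hh, rfl⟩
    exact fun i _ => hh.1 i
  set P : Set (ℕ × (ℕ → G)) :=
    {p | p.1 ≤ l ∧ ∃ h ∈ H, ∃ a ∈ ({g⁻¹, g'⁻¹} : Set G),
      p.2 = Function.update h p.1 a} with hPdef
  have hPfin : P.Finite := by
    have hsub : P ⊆ (fun q : ℕ × (ℕ → G) × G =>
        (q.1, Function.update q.2.1 q.1 q.2.2)) ''
          ((Set.Iic l) ×ˢ (H ×ˢ ({g⁻¹, g'⁻¹} : Set G))) := by
      rintro ⟨k, gs⟩ ⟨hkl, h, hh, a, ha, heq⟩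
      exact ⟨(k, h, a), ⟨hkl, hh, ha⟩, by simp at heq ⊢; rw [heq]⟩
    exact (((Set.finite_Iic l).prod (hHfin.prod
      ((Set.finite_singleton _).insert _))).image _).subset hsub
  refine ⟨hPfin.toFinset.sup (fun p => N0 p.1 p.2), ?_⟩
  intro n hn y hy
  obtain ⟨k, gs, ts, z, hkl, hgsk, hgsS, rfl⟩ := hy
  set h : ℕ → G := fun m => if m < k then gs m else 1 with hhdef
  have hhH : h ∈ H := by
    constructor
    · intro m
      by_cases hm : m < k
      · simp only [hhdef, if_pos hm]
        exact Set.mem_insert_of_mem _ (hgsS m hm)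
      · simp only [hhdef, if_neg hm]
        exact Set.mem_insert _ _
    · intro m hm
      have : ¬ m < k := not_lt.2 (hkl.trans hm)
      simp [hhdef, this]
  set Q : G := (((List.range k).map h).reverse).prod with hQdef
  set w : W n := f n z with hwdef
  have key : ∀ a : G, a ∈ ({g⁻¹, g'⁻¹} : Set G) →
      dist (f n ((A n).Γ k (Function.update gs k a) ts z)) ((a * Q) • w) ≤ ε / 2 := by
    intro a ha
    have hmem : (k, Function.update h k a) ∈ P := ⟨hkl, h, hhH, a, ha, rfl⟩
    have hle : N0 k (Function.update h k a) ≤ hPfin.toFinset.sup (fun p => N0 p.1 p.2) :=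
      Finset.le_sup (f := fun p => N0 p.1 p.2) (hPfin.mem_toFinset.2 hmem)
    have hΓ : (A n).Γ k (Function.update gs k a) ts z
        = (A n).Γ k (Function.update h k a) ts z := by
      apply (A n).junk
      · intro m hm
        rcases eq_or_lt_of_le hm with h1 | h1
        · subst h1; simp
        · rw [Function.update_of_ne (Nat.ne_of_lt h1), Function.update_of_ne (Nat.ne_of_lt h1)]
          simp [hhdef, h1]
      · intro _ _ _; rfl
    have hmap : (List.range k).map (Function.update h k a) = (List.range k).map h :=
      List.map_congr_left
        (fun m hm => Function.update_of_ne (Nat.ne_of_lt (List.mem_range.1 hm)) _ _)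
    have hchain : chainProd k (Function.update h k a) = a * Q := by
      unfold chainProd
      rw [List.range_succ, List.map_append, List.reverse_append, hmap]
      simp [hQdef]
    have := hN0 k (Function.update h k a) n (le_trans hle hn) ts z
    rw [hchain] at this
    rw [hΓ]
    exact this
  have e1 : act n g⁻¹ (wmk (A n) (k, gs, ts, z))
      = wmk (A n) (k, Function.update gs k g⁻¹, ts, z) := by
    rw [hact, hgsk, mul_one]
  have e2 : act n g'⁻¹ (wmk (A n) (k, gs, ts, z))
      = wmk (A n) (k, Function.update gs k g'⁻¹, ts, z) := by
    rw [hact, hgsk, mul_one]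
  have hgQ : ∀ b : G, b • ((b⁻¹ * Q) • w) = Q • w := by
    intro b
    rw [smul_smul, mul_inv_cancel_left]
  have d1 : dist (g • f n (R n (act n g⁻¹ (wmk (A n) (k, gs, ts, z))))) (Q • w) ≤ ε / 2 := by
    rw [e1, hR, ← hgQ g, hiso]
    exact key g⁻¹ (Set.mem_insert _ _)
  have d2 : dist (g' • f n (R n (act n g'⁻¹ (wmk (A n) (k, gs, ts, z))))) (Q • w) ≤ ε / 2 := by
    rw [e2, hR, ← hgQ g', hiso]
    exact key g'⁻¹ (Set.mem_insert_of_mem _ rfl)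
  calc dist (g • f n (R n (act n g⁻¹ (wmk (A n) (k, gs, ts, z)))))
        (g' • f n (R n (act n g'⁻¹ (wmk (A n) (k, gs, ts, z)))))
      ≤ dist (g • f n (R n (act n g⁻¹ (wmk (A n) (k, gs, ts, z))))) (Q • w)
          + dist (Q • w) (g' • f n (R n (act n g'⁻¹ (wmk (A n) (k, gs, ts, z))))) :=
        dist_triangle _ _ _
    _ ≤ ε / 2 + ε / 2 := add_le_add d1 (by rw [dist_comm]; exact d2)
    _ = ε := by ring

end HCAction
end

section
/- Let (X,d), p, Z, Ψ, M, N, φ be as in the context, and define f : X → X by f(x) := Ψ(min(1, φ(p(x))), x) and U_φ := {(x,x') ∈ X×X : p(x) = p(x') and d(x,x') ≤ φ(p(x))}. Then: (0) f^k(x) = Ψ(min(1, k·φ(p(x))), x) for all k ∈ ℕ and x ∈ X; (1) {(x,f(x)) : x ∈ X} ⊆ U_φ^M, i.e. f is close to the identity; (2) f(Z) ⊆ Z; (3) f^{N·l}(U_φ^l[Z]) ⊆ Z for every l ≥ 1; (4) ⋃_{k∈ℕ}(f^k × f^k)(U_φ^l) ⊆ U_φ^{M·l} for every l ≥ 1;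 (5) for every B ⊆ X with p(B) finite there exists k ∈ ℕ with B ∩ f^k(X) ⊆ Z; (6) for every B' ⊆ Z with p(B') finite there exists k' ∈ ℕ with ⋃_{m≤k'} f^{−m}(B') = ⋃_{m∈ℕ} f^{−m}(B'). (These are the six conditions making the pair (X,Z), with entourages the subsets of the relations U_φ^l and with bounded sets those B with p(B) finite, relatively flasque with witness f.) -/
/-!
Statement 8: the point-set core of the proof that controlled deformation retractions produce
relatively flasque pairs.

`rpow U l` is the `l`-fold relational composition of an entourage `U ⊆ X × X` (with `rpow U 0`
the diagonal), and `thick U A` is the `U`-thickening `U[A]`.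
-/

noncomputable section

variable {X : Type*}

/-- Relational composition of entourages. -/
def rcomp (U V : Set (X × X)) : Set (X × X) :=
  {p | ∃ y, (p.1, y) ∈ U ∧ (y, p.2) ∈ V}

/-- `l`-fold relational composition, with `rpow U 0` the diagonal. -/
def rpow (U : Set (X × X)) : ℕ → Set (X × X)
  | 0 => {p | p.1 = p.2}
  | l + 1 => rcomp U (rpow U l)

/-- `U`-thickening of a subset. -/
def thick (U : Set (X × X)) (A : Set X) : Set X := {x | ∃ a ∈ A, (x, a) ∈ U}

theorem statement8 [MetricSpace X] (p : X → ℕ)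
    -- chain condition: within each fiber, any two points at distance ≤ m·r are joined
    -- by a chain of m steps of width ≤ r (e.g. the fibers carry path metrics)
    (hchain : ∀ (n : ℕ) (x x' : X), p x = n → p x' = n → ∀ (m : ℕ), 1 ≤ m → ∀ r > (0 : ℝ),
      dist x x' ≤ m * r → ∃ c : ℕ → X, c 0 = x ∧ c m = x' ∧ (∀ i ≤ m, p (c i) = n) ∧
        ∀ i < m, dist (c i) (c (i + 1)) ≤ r)
    (Z : Set X) (Ψ : ℝ → X → X)
    (hp : ∀ t ∈ Set.Icc (0 : ℝ) 1, ∀ x, p (Ψ t x) = p x)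
    -- (i)
    (h0 : ∀ x, Ψ 0 x = x)
    -- (ii)
    (h1 : ∀ x, Ψ 1 x ∈ Z)
    -- (iii)
    (hZ : ∀ t ∈ Set.Icc (0 : ℝ) 1, ∀ z ∈ Z, Ψ t z = z)
    -- (iv)
    (hsemigp : ∀ s ∈ Set.Icc (0 : ℝ) 1, ∀ t ∈ Set.Icc (0 : ℝ) 1, ∀ x,
      Ψ s (Ψ t x) = Ψ (min (s + t) 1) x)
    -- (v) Lipschitz with constant M with respect to the sum metric on [0,1] × X
    (M : ℕ) (hM : 1 ≤ M)
    (hLip : ∀ s ∈ Set.Icc (0 : ℝ) 1, ∀ t ∈ Set.Icc (0 : ℝ) 1, ∀ x y : X,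
      dist (Ψ s x) (Ψ t y) ≤ (M : ℝ) * (|s - t| + dist x y))
    -- (vi)
    (N : ℕ)
    (hN : ∀ ε > (0 : ℝ), ∀ x : X, (∃ z ∈ Z, p x = p z ∧ dist x z ≤ ε) →
      Ψ (min 1 ((N : ℝ) * ε)) x ∈ Z)
    (φ : ℕ → ℝ) (hφ : ∀ n, 0 < φ n)
    -- the map f and the entourage U_φ
    (f : X → X) (hf : ∀ x, f x = Ψ (min 1 (φ (p x))) x)
    (Uφ : Set (X × X))
    (hU : Uφ = {q : X × X | p q.1 = p q.2 ∧ dist q.1 q.2 ≤ φ (p q.1)}) :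
    -- (0)
    (∀ (k : ℕ) (x : X), f^[k] x = Ψ (min 1 ((k : ℝ) * φ (p x))) x) ∧
    -- (1) f is close to the identity
    (∀ x : X, (x, f x) ∈ rpow Uφ M) ∧
    -- (2) f(Z) ⊆ Z
    (∀ z ∈ Z, f z ∈ Z) ∧
    -- (3)
    (∀ l : ℕ, 1 ≤ l → ∀ x ∈ thick (rpow Uφ l) Z, f^[N * l] x ∈ Z) ∧
    -- (4)
    (∀ l : ℕ, 1 ≤ l → ∀ k : ℕ, ∀ q ∈ rpow Uφ l, (f^[k] q.1, f^[k] q.2) ∈ rpow Uφ (M * l)) ∧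
    -- (5)
    (∀ B : Set X, (p '' B).Finite → ∃ k : ℕ, ∀ x ∈ B, x ∈ Set.range f^[k] → x ∈ Z) ∧
    -- (6)
    (∀ B' ⊆ Z, (p '' B').Finite →
      ∃ k' : ℕ, (⋃ m ≤ k', f^[m] ⁻¹' B') = ⋃ m : ℕ, f^[m] ⁻¹' B') := by

  -- basic helpers
  have hIcc : ∀ c : ℝ, 0 ≤ c → min 1 c ∈ Set.Icc (0 : ℝ) 1 :=
    fun c hc => ⟨le_min zero_le_one hc, min_le_left _ _⟩
  have hpf : ∀ x, p (f x) = p x := by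
    intro x; rw [hf]; exact hp _ (hIcc _ (hφ _).le) x
  have hpfk : ∀ (k : ℕ) (x : X), p (f^[k] x) = p x := by
    intro k
    induction k with
    | zero => intro x; rfl
    | succ k ih =>
      intro x
      rw [Function.iterate_succ_apply', hpf, ih]
  have hfZ : ∀ z ∈ Z, f z = z := by
    intro z hz; rw [hf]; exact hZ _ (hIcc _ (hφ _).le) z hz
  -- min-arithmetic lemma
  have hmin : ∀ (a : ℝ), 0 < a → ∀ k : ℕ,
      min (min 1 a + min 1 ((k : ℝ) * a)) 1 = min 1 (((k : ℝ) + 1) * a) := by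
    intro a ha k
    have hk : (0 : ℝ) ≤ (k : ℝ) := Nat.cast_nonneg k
    simp only [min_def]
    split_ifs <;> nlinarith
  -- (0)
  have h0' : ∀ (k : ℕ) (x : X), f^[k] x = Ψ (min 1 ((k : ℝ) * φ (p x))) x := by
    intro k
    induction k with
    | zero =>
      intro x
      simp only [Function.iterate_zero_apply, Nat.cast_zero, zero_mul]
      rw [min_eq_right zero_le_one, h0]
    | succ k ih =>
      intro x
      have hk0 : (0 : ℝ) ≤ (k : ℝ) * φ (p x) := mul_nonneg (Nat.cast_nonneg k) (hφ _).le
      rw [Function.iterate_succ_apply', ih, hf, hp _ (hIcc _ hk0) x,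
        hsemigp _ (hIcc _ (hφ _).le) _ (hIcc _ hk0) x]
      congr 1
      push_cast
      exact hmin _ (hφ _) k
  -- chains give membership in rpow
  have hchainmem : ∀ (l : ℕ) (c : ℕ → X) (n : ℕ), (∀ i ≤ l, p (c i) = n) →
      (∀ i < l, dist (c i) (c (i + 1)) ≤ φ n) → (c 0, c l) ∈ rpow Uφ l := by
    intro l
    induction l with
    | zero => intro c n _ _; simp [rpow]
    | succ l ih =>
      intro c n hcp hcd
      refine ⟨c 1, ?_, ?_⟩
      · rw [hU]
        refine ⟨by rw [hcp 0 (by omega), hcp 1 (by omega)], ?_⟩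
        rw [hcp 0 (by omega)]
        exact hcd 0 (by omega)
      · have := ih (fun i => c (i + 1)) n (fun i hi => hcp (i + 1) (by omega))
          (fun i hi => hcd (i + 1) (by omega))
        simpa using this
  -- bound from membership in rpow
  have hrbound : ∀ (l : ℕ) (q : X × X), q ∈ rpow Uφ l →
      p q.1 = p q.2 ∧ dist q.1 q.2 ≤ (l : ℝ) * φ (p q.1) := by
    intro l
    induction l with
    | zero =>
      intro q hq
      have : q.1 = q.2 := hq
      rw [this]
      simp
    | succ l ih =>
      intro q hq
      obtain ⟨y, hy1, hy2⟩ := hq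
      rw [hU] at hy1
      obtain ⟨hpe, hde⟩ := hy1
      obtain ⟨hpe2, hde2⟩ := ih (y, q.2) hy2
      refine ⟨hpe.trans hpe2, ?_⟩
      have htri := dist_triangle q.1 y q.2
      have : φ (p y) = φ (p q.1) := by rw [hpe]
      push_cast
      nlinarith [hφ (p q.1)]
  -- key finiteness lemma
  have hkey : ∀ S : Set ℕ, S.Finite → ∃ k : ℕ, ∀ n ∈ S, 1 ≤ (k : ℝ) * φ n := by
    intro S hS
    obtain ⟨c, hc⟩ := (hS.image fun n => (φ n)⁻¹).bddAbove
    obtain ⟨k, hk⟩ := exists_nat_ge c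
    refine ⟨k, fun n hn => ?_⟩
    have h1 : (φ n)⁻¹ ≤ c := hc (Set.mem_image_of_mem _ hn)
    have h2 : (φ n)⁻¹ ≤ (k : ℝ) := h1.trans hk
    have h3 := hφ n
    calc (1 : ℝ) = (φ n)⁻¹ * φ n := (inv_mul_cancel₀ (ne_of_gt h3)).symm
      _ ≤ (k : ℝ) * φ n := mul_le_mul_of_nonneg_right h2 h3.le
  refine ⟨h0', ?_, fun z hz => by rw [hfZ z hz]; exact hz, ?_, ?_, ?_, ?_⟩
  -- (1)
  · intro x
    have ht0 : 0 ≤ min 1 (φ (p x)) := le_min zero_le_one (hφ _).le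
    have hdist : dist x (f x) ≤ (M : ℝ) * φ (p x) := by
      rw [hf]
      have h := hLip 0 ⟨le_refl 0, zero_le_one⟩ (min 1 (φ (p x))) (hIcc _ (hφ _).le) x x
      rw [h0, dist_self, add_zero, zero_sub, abs_neg, abs_of_nonneg ht0] at h
      calc dist x (Ψ (min 1 (φ (p x))) x) ≤ (M : ℝ) * min 1 (φ (p x)) := h
        _ ≤ (M : ℝ) * φ (p x) :=
          mul_le_mul_of_nonneg_left (min_le_right _ _) (Nat.cast_nonneg M)
    obtain ⟨c, hc0, hcM, hcp, hcd⟩ :=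
      hchain (p x) x (f x) rfl (hpf x) M hM (φ (p x)) (hφ _) hdist
    have := hchainmem M c (p x) hcp hcd
    rwa [hc0, hcM] at this
  -- (3)
  · intro l hl x hx
    obtain ⟨z, hz, hxz⟩ := hx
    obtain ⟨hpz, hdz⟩ := hrbound l (x, z) hxz
    have hlpos : (0 : ℝ) < (l : ℝ) * φ (p x) := by
      have : (0 : ℝ) < (l : ℝ) := by exact_mod_cast hl
      exact mul_pos this (hφ _)
    have hZmem := hN ((l : ℝ) * φ (p x)) hlpos x ⟨z, hz, hpz, hdz⟩
    rw [h0' (N * l) x]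
    have : ((N * l : ℕ) : ℝ) * φ (p x) = (N : ℝ) * ((l : ℝ) * φ (p x)) := by
      push_cast; ring
    rw [this]
    exact hZmem
  -- (4)
  · intro l hl k q hq
    obtain ⟨hpq, hdq⟩ := hrbound l q hq
    have hk0 : (0 : ℝ) ≤ (k : ℝ) * φ (p q.1) := mul_nonneg (Nat.cast_nonneg k) (hφ _).le
    have ht : min 1 ((k : ℝ) * φ (p q.2)) = min 1 ((k : ℝ) * φ (p q.1)) := by rw [hpq]
    have h1' : f^[k] q.1 = Ψ (min 1 ((k : ℝ) * φ (p q.1))) q.1 := h0' k q.1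
    have h2' : f^[k] q.2 = Ψ (min 1 ((k : ℝ) * φ (p q.1))) q.2 := by
      rw [h0' k q.2, ht]
    have hdist : dist (f^[k] q.1) (f^[k] q.2) ≤ ((M * l : ℕ) : ℝ) * φ (p q.1) := by
      rw [h1', h2']
      have h := hLip _ (hIcc _ hk0) _ (hIcc _ hk0) q.1 q.2
      rw [sub_self, abs_zero, zero_add] at h
      push_cast
      nlinarith [(by exact_mod_cast hM : (1:ℝ) ≤ (M:ℝ)), hφ (p q.1), dist_nonneg (x := q.1) (y := q.2)]
    have hMl : 1 ≤ M * l := by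
      calc 1 = 1 * 1 := rfl
        _ ≤ M * l := Nat.mul_le_mul hM hl
    obtain ⟨c, hc0, hcM, hcp, hcd⟩ :=
      hchain (p q.1) (f^[k] q.1) (f^[k] q.2) (hpfk k q.1) (by rw [hpfk, hpq]) (M * l) hMl
        (φ (p q.1)) (hφ _) hdist
    have := hchainmem (M * l) c (p q.1) hcp hcd
    rwa [hc0, hcM] at this
  -- (5)
  · intro B hB
    obtain ⟨k, hk5⟩ := hkey (p '' B) hB
    refine ⟨k, fun x hxB hxr => ?_⟩
    obtain ⟨y, hy⟩ := hxr
    have hpy : p y = p x := by rw [← hy, hpfk]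
    have h1k : 1 ≤ (k : ℝ) * φ (p y) := by
      rw [hpy]; exact hk5 _ ⟨x, hxB, rfl⟩
    rw [← hy, h0' k y, min_eq_left h1k]
    exact h1 y
  -- (6)
  · intro B' hB'Z hB'
    obtain ⟨k', hk6⟩ := hkey (p '' B') hB'
    refine ⟨k', Set.Subset.antisymm (Set.iUnion₂_subset fun m _ => Set.subset_iUnion (fun i => f^[i] ⁻¹' B') m) ?_⟩
    intro x hx
    obtain ⟨m, hm⟩ := Set.mem_iUnion.mp hx
    by_cases hmk : m ≤ k'
    · exact Set.mem_iUnion₂.mpr ⟨m, hmk, hm⟩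
    · push_neg at hmk
      have hn : p (f^[m] x) ∈ p '' B' := ⟨_, hm, rfl⟩
      rw [hpfk] at hn
      have h1k : 1 ≤ (k' : ℝ) * φ (p x) := hk6 _ hn
      have hzk : f^[k'] x ∈ Z := by
        rw [h0' k' x, min_eq_left h1k]; exact h1 x
      have hstab : ∀ j, f^[k' + j] x = f^[k'] x := by
        intro j
        induction j with
        | zero => rfl
        | succ j ih =>
          rw [← Nat.add_assoc, Function.iterate_succ_apply', ih, hfZ _ hzk]
      have hmem : f^[k'] x ∈ B' := by
        have h' := hstab (m - k')
        rw [Nat.add_sub_cancel' hmk.le] at h'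
        rw [← h']
        exact hm
      exact Set.mem_iUnion₂.mpr ⟨k', le_refl _, hmem⟩


end
end

section
/- Let d ∈ ℕ, let Δ^d := {x ∈ ℝ^{d+1} : x_i ≥ 0 for all i, Σ_i x_i = 1} be the standard d-simplex with the Euclidean norm ‖·‖, and let b := (1/(d+1),…,1/(d+1)) be its barycentre. Define Ψ : [0,1] × Δ^d → ℝ^{d+1} by Ψ(s,x) := x − min(1, s/‖x−b‖)·(x−b) for x ≠ b and Ψ(s,b) := b. Then: (i) Ψ takes values in Δ^d; (ii) ‖x−b‖ ≤ √(d/(d+1)) < 1 for all x ∈ Δ^d, Ψ(0,x) = x and Ψ(1,x) = b for all x ∈ Δ^d; (iii) Ψ(s,b) = b for all s; (iv) Ψ(s,Ψ(t,x)) = Ψ(min(s+t,1),x) for all s,t ∈ [0,1] and x ∈ Δ^d; (v) there exists a constant C such that Ψ is Lipschitz with constant C with respect to the metric |s−s'| + ‖x−x'‖ on [0,1] × Δ^d; (vi) for every ε > 0 and every x ∈ Δ^d with ‖x−b‖ ≤ ε one has Ψ(min(1,ε),x) = b. -/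
/-!
Statement 9: the barycentric deformation of the standard `d`-simplex.
`en` denotes the Euclidean norm on `Fin (d+1) → ℝ`.
-/

open scoped Classical

noncomputable section

/-- Euclidean norm on `Fin (d+1) → ℝ`. -/
def en {d : ℕ} (x : Fin (d + 1) → ℝ) : ℝ := Real.sqrt (∑ i, x i ^ 2)

/-- The barycentre of the standard `d`-simplex. -/
def bary (d : ℕ) : Fin (d + 1) → ℝ := fun _ => 1 / (d + 1)

/-- The deformation moving points of the simplex with unit speed towards the barycentre. -/
def Psi (d : ℕ) (s : ℝ) (x : Fin (d + 1) → ℝ) : Fin (d + 1) → ℝ :=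
  if x = bary d then bary d
  else x - min 1 (s / en (x - bary d)) • (x - bary d)

/-!
In any real normed space, `x ↦ x - min 1 (s / ‖x - b‖) • (x - b)` keeps `x` on the segment
`[x, b]` and replaces `‖x - b‖` by `max (‖x - b‖ - s) 0`; the semigroup law follows from this
distance formula. For `s > 0` the map is `x - r (x - b)`, where `r` is the radial retraction onto
the closed ball of radius `s`. That retraction is `2`-Lipschitz in every normed space, so the
deformation is `3`-Lipschitz in `x`; it is `1`-Lipschitz in `s`. On the simplex
`‖x - b‖² = ∑ xᵢ² - 1 / (d + 1) ≤ d / (d + 1) < 1`, because `∑ xᵢ² ≤ (∑ xᵢ)² = 1`, so every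
point has reached `b` at time `1`.
-/

section RadialShrink

variable {E : Type*} [NormedAddCommGroup E] [NormedSpace ℝ E]

def radialShrink (b : E) (s : ℝ) (x : E) : E := x - min 1 (s / ‖x - b‖) • (x - b)

def radialRetraction (s : ℝ) (v : E) : E := (s / max s ‖v‖) • v

variable {b x : E} {s t : ℝ}

@[simp]
lemma radialShrink_zero : radialShrink b 0 x = x := by
  simp [radialShrink]

@[simp]
lemma radialShrink_center : radialShrink b s b = b := by
  simp [radialShrink]

lemma radialShrink_sub_center :
    radialShrink b s x - b = (max (‖x - b‖ - s) 0 / ‖x - b‖) • (x - b) := by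
  rcases eq_or_ne x b with rfl | hx
  · simp
  have hr : 0 < ‖x - b‖ := norm_pos_iff.2 (sub_ne_zero.2 hx)
  have hcoeff : 1 - min 1 (s / ‖x - b‖) = max (‖x - b‖ - s) 0 / ‖x - b‖ := by
    rcases le_total s ‖x - b‖ with h | h
    · rw [min_eq_right ((div_le_one hr).2 h), max_eq_left (sub_nonneg.2 h)]
      field_simp
    · rw [min_eq_left ((one_le_div hr).2 h), max_eq_right (sub_nonpos.2 h)]
      simp
  rw [← hcoeff, sub_smul, one_smul, radialShrink, sub_right_comm]

lemma norm_radialShrink_sub_center (hs : 0 ≤ s) :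
    ‖radialShrink b s x - b‖ = max (‖x - b‖ - s) 0 := by
  rcases eq_or_ne x b with rfl | hx
  · simp [hs]
  have hr : 0 < ‖x - b‖ := norm_pos_iff.2 (sub_ne_zero.2 hx)
  rw [radialShrink_sub_center, norm_smul,
    Real.norm_of_nonneg (div_nonneg (le_max_right _ _) hr.le), div_mul_cancel₀ _ hr.ne']

lemma radialShrink_eq_center (h : ‖x - b‖ ≤ s) : radialShrink b s x = b := by
  rw [← sub_eq_zero, radialShrink_sub_center,
    max_eq_right (sub_nonpos.2 h), zero_div, zero_smul]

lemma radialShrink_min_of_norm_le {r : ℝ} (h : ‖x - b‖ ≤ r) :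
    radialShrink b (min s r) x = radialShrink b s x := by
  rcases le_total s r with hsr | hrs
  · rw [min_eq_left hsr]
  · rw [min_eq_right hrs, radialShrink_eq_center h, radialShrink_eq_center (h.trans hrs)]

lemma radialShrink_radialShrink (hs : 0 ≤ s) (ht : 0 ≤ t) :
    radialShrink b s (radialShrink b t x) = radialShrink b (s + t) x := by
  rw [← sub_left_inj (a := b), radialShrink_sub_center, norm_radialShrink_sub_center ht,
    radialShrink_sub_center, radialShrink_sub_center, smul_smul]
  congr 1
  rcases le_or_gt ‖x - b‖ t with h | h
  · have hst : ‖x - b‖ - (s + t) ≤ 0 := by linarith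
    simp [max_eq_right (sub_nonpos.2 h), max_eq_right hst, hs]
  · rw [max_eq_left (sub_nonneg.2 h.le), div_mul_div_cancel₀ (sub_pos.2 h).ne', sub_sub,
      add_comm t s]

lemma norm_radialShrink_sub_radialShrink_le (s s' : ℝ) (x : E) :
    ‖radialShrink b s x - radialShrink b s' x‖ ≤ |s - s'| := by
  rcases eq_or_ne x b with rfl | hx
  · simp
  have hr : 0 < ‖x - b‖ := norm_pos_iff.2 (sub_ne_zero.2 hx)
  have hmin (u : ℝ) : min 1 (u / ‖x - b‖) * ‖x - b‖ = min ‖x - b‖ u := by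
    rw [min_mul_of_nonneg _ _ hr.le, one_mul, div_mul_cancel₀ _ hr.ne']
  calc ‖radialShrink b s x - radialShrink b s' x‖
      = |min 1 (s' / ‖x - b‖) - min 1 (s / ‖x - b‖)| * ‖x - b‖ := by
        rw [radialShrink, radialShrink, sub_sub_sub_cancel_left, ← sub_smul, norm_smul,
          Real.norm_eq_abs]
    _ = |min ‖x - b‖ s' - min ‖x - b‖ s| := by
        rw [← abs_of_pos hr, ← abs_mul, sub_mul, abs_of_pos hr, hmin, hmin]
    _ ≤ |s' - s| := by
        simpa using abs_min_sub_min_le_max ‖x - b‖ s' ‖x - b‖ s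
    _ = |s - s'| := abs_sub_comm _ _

lemma radialShrink_eq_sub_radialRetraction (hs : 0 < s) :
    radialShrink b s x = x - radialRetraction s (x - b) := by
  rcases eq_or_ne x b with rfl | hx
  · simp [radialRetraction]
  have hr : 0 < ‖x - b‖ := norm_pos_iff.2 (sub_ne_zero.2 hx)
  rw [radialShrink, radialRetraction]
  congr 2
  rcases le_total ‖x - b‖ s with h | h
  · rw [max_eq_left h, div_self hs.ne', min_eq_left ((one_le_div hr).2 h)]
  · rw [max_eq_right h, min_eq_right ((div_le_one hr).2 h)]

lemma norm_radialRetraction_sub_le (hs : 0 < s) (v w : E) :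
    ‖radialRetraction s v - radialRetraction s w‖ ≤ 2 * ‖v - w‖ := by
  set M := max s ‖v‖
  set N := max s ‖w‖
  have hM : 0 < M := hs.trans_le (le_max_left _ _)
  have hN : 0 < N := hs.trans_le (le_max_left _ _)
  have hMN : |M - N| ≤ ‖v - w‖ := by
    calc |M - N| ≤ |‖v‖ - ‖w‖| := by
          simpa only [M, N, max_comm s] using abs_max_sub_max_le_abs ‖v‖ ‖w‖ s
      _ ≤ ‖v - w‖ := abs_norm_sub_norm_le v w
  have hfirst : ‖(s / M) • (v - w)‖ ≤ ‖v - w‖ := by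
    rw [norm_smul, Real.norm_of_nonneg (by positivity)]
    exact mul_le_of_le_one_left (norm_nonneg _) (div_le_one_of_le₀ (le_max_left _ _) hM.le)
  -- `s ≤ M` and `‖w‖ ≤ N` absorb the two denominators of `s / M - s / N = s (N - M) / (M N)`.
  have hsecond : ‖(s / M - s / N) • w‖ ≤ ‖v - w‖ := by
    have hcoeff : |s / M - s / N| = s * |M - N| / (M * N) := by
      rw [div_sub_div _ _ hM.ne' hN.ne', abs_div, abs_of_pos (mul_pos hM hN),
        show s * N - M * s = s * (N - M) by ring, abs_mul, abs_of_pos hs, abs_sub_comm]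
    rw [norm_smul, Real.norm_eq_abs, hcoeff, div_mul_eq_mul_div, div_le_iff₀ (mul_pos hM hN)]
    calc s * |M - N| * ‖w‖ ≤ M * ‖v - w‖ * N :=
          mul_le_mul (mul_le_mul (le_max_left _ _) hMN (abs_nonneg _) hM.le) (le_max_right _ _)
            (norm_nonneg _) (by positivity)
      _ = ‖v - w‖ * (M * N) := by ring
  calc ‖radialRetraction s v - radialRetraction s w‖
      = ‖(s / M) • (v - w) + (s / M - s / N) • w‖ := by
        change ‖(s / M) • v - (s / N) • w‖ = _
        congr 1
        module
    _ ≤ 2 * ‖v - w‖ := (norm_add_le _ _).trans (by linarith)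

lemma norm_radialShrink_sub_radialShrink_le_three_mul (hs : 0 ≤ s) (x y : E) :
    ‖radialShrink b s x - radialShrink b s y‖ ≤ 3 * ‖x - y‖ := by
  rcases hs.eq_or_lt with rfl | hs
  · simp only [radialShrink_zero]
    linarith [norm_nonneg (x - y)]
  rw [radialShrink_eq_sub_radialRetraction hs, radialShrink_eq_sub_radialRetraction hs,
    sub_sub_sub_comm]
  have := norm_radialRetraction_sub_le hs (x - b) (y - b)
  rw [sub_sub_sub_cancel_right] at this
  linarith [norm_sub_le (x - y) (radialRetraction s (x - b) - radialRetraction s (y - b))]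

lemma norm_radialShrink_sub_le {s' : ℝ} (hs' : 0 ≤ s') (x y : E) :
    ‖radialShrink b s x - radialShrink b s' y‖ ≤ 3 * (|s - s'| + ‖x - y‖) := by
  linarith [norm_sub_le_norm_sub_add_norm_sub (radialShrink b s x) (radialShrink b s' x)
      (radialShrink b s' y), norm_radialShrink_sub_radialShrink_le (b := b) s s' x,
    norm_radialShrink_sub_radialShrink_le_three_mul (b := b) hs' x y, abs_nonneg (s - s'),
    norm_nonneg (x - y)]

end RadialShrink

section Simplex

variable {d : ℕ}

lemma en_eq_norm (x : Fin (d + 1) → ℝ) : en x = ‖WithLp.toLp 2 x‖ := by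
  simp [en, EuclideanSpace.norm_eq, sq_abs]

lemma Psi_eq (s : ℝ) (x : Fin (d + 1) → ℝ) :
    Psi d s x = x - min 1 (s / en (x - bary d)) • (x - bary d) := by
  rw [Psi]
  split_ifs with h
  · simp [h]
  · rfl

lemma toLp_Psi (s : ℝ) (x : Fin (d + 1) → ℝ) :
    WithLp.toLp 2 (Psi d s x) = radialShrink (WithLp.toLp 2 (bary d)) s (WithLp.toLp 2 x) := by
  simp only [Psi_eq, radialShrink, en_eq_norm, WithLp.toLp_sub, WithLp.toLp_smul]

lemma en_Psi_sub_Psi_le {s s' : ℝ} (hs' : 0 ≤ s') (x x' : Fin (d + 1) → ℝ) :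
    en (Psi d s x - Psi d s' x') ≤ 3 * (|s - s'| + en (x - x')) := by
  simpa only [en_eq_norm, WithLp.toLp_sub, toLp_Psi] using norm_radialShrink_sub_le hs' _ _

lemma Psi_zero (x : Fin (d + 1) → ℝ) : Psi d 0 x = x :=
  WithLp.toLp_injective 2 <| by rw [toLp_Psi, radialShrink_zero]

lemma Psi_bary (s : ℝ) : Psi d s (bary d) = bary d :=
  WithLp.toLp_injective 2 <| by rw [toLp_Psi, radialShrink_center]

lemma Psi_eq_bary {s : ℝ} {x : Fin (d + 1) → ℝ} (h : en (x - bary d) ≤ s) :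
    Psi d s x = bary d :=
  WithLp.toLp_injective 2 <| by
    rw [toLp_Psi, radialShrink_eq_center (by rwa [← WithLp.toLp_sub, ← en_eq_norm])]

lemma Psi_Psi {s t : ℝ} (hs : 0 ≤ s) (ht : 0 ≤ t) (x : Fin (d + 1) → ℝ) :
    Psi d s (Psi d t x) = Psi d (s + t) x :=
  WithLp.toLp_injective 2 <| by rw [toLp_Psi, toLp_Psi, toLp_Psi, radialShrink_radialShrink hs ht]

lemma Psi_min_of_en_le {s r : ℝ} {x : Fin (d + 1) → ℝ} (h : en (x - bary d) ≤ r) :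
    Psi d (min s r) x = Psi d s x :=
  WithLp.toLp_injective 2 <| by
    rw [toLp_Psi, toLp_Psi,
      radialShrink_min_of_norm_le (by rwa [← WithLp.toLp_sub, ← en_eq_norm])]

lemma bary_mem_stdSimplex : bary d ∈ stdSimplex ℝ (Fin (d + 1)) :=
  ⟨fun _ => by simp only [bary]; positivity, by simp [bary]; field_simp⟩

lemma Psi_mem_stdSimplex {s : ℝ} (hs : 0 ≤ s) {x : Fin (d + 1) → ℝ}
    (hx : x ∈ stdSimplex ℝ (Fin (d + 1))) : Psi d s x ∈ stdSimplex ℝ (Fin (d + 1)) := by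
  have hc : min 1 (s / en (x - bary d)) ∈ Set.Icc (0 : ℝ) 1 :=
    ⟨le_min zero_le_one (div_nonneg hs (en_eq_norm _ ▸ norm_nonneg _)), min_le_left _ _⟩
  rw [Psi_eq, sub_eq_add_neg, ← smul_neg, neg_sub]
  exact (convex_stdSimplex ℝ _).add_smul_sub_mem hx bary_mem_stdSimplex hc

lemma en_sub_bary_le {x : Fin (d + 1) → ℝ} (hx : x ∈ stdSimplex ℝ (Fin (d + 1))) :
    en (x - bary d) ≤ Real.sqrt (d / (d + 1)) := by
  obtain ⟨hnonneg, hsum⟩ := hx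
  have hsq : ∑ i, x i ^ 2 ≤ 1 := by
    simpa [hsum] using Finset.sum_sq_le_sq_sum_of_nonneg (s := Finset.univ) fun i _ => hnonneg i
  have hexpand : ∑ i, (x - bary d) i ^ 2 = ∑ i, x i ^ 2 - 1 / (d + 1) := by
    simp only [Pi.sub_apply, bary, sub_sq, Finset.sum_add_distrib, Finset.sum_sub_distrib,
      ← Finset.sum_mul, ← Finset.mul_sum, hsum, Finset.sum_const, Finset.card_univ,
      Fintype.card_fin, nsmul_eq_mul, Nat.cast_add, Nat.cast_one]
    field_simp
    ring
  apply Real.sqrt_le_sqrt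
  rw [hexpand]
  have hd : (d : ℝ) / (d + 1) = 1 - 1 / (d + 1) := by field_simp; ring
  linarith

lemma sqrt_div_succ_lt_one : Real.sqrt ((d : ℝ) / (d + 1)) < 1 := by
  rw [Real.sqrt_lt' one_pos, one_pow, div_lt_one (by positivity)]
  linarith

lemma en_sub_bary_lt_one {x : Fin (d + 1) → ℝ} (hx : x ∈ stdSimplex ℝ (Fin (d + 1))) :
    en (x - bary d) < 1 :=
  (en_sub_bary_le hx).trans_lt sqrt_div_succ_lt_one

end Simplex

theorem statement9 (d : ℕ) :
    -- (i) Ψ takes values in the simplex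
    (∀ s ∈ Set.Icc (0 : ℝ) 1, ∀ x ∈ stdSimplex ℝ (Fin (d + 1)), Psi d s x ∈ stdSimplex ℝ (Fin (d + 1))) ∧
    -- (ii)
    (∀ x ∈ stdSimplex ℝ (Fin (d + 1)), en (x - bary d) ≤ Real.sqrt (d / (d + 1))) ∧
    (Real.sqrt (d / (d + 1)) < 1) ∧
    (∀ x ∈ stdSimplex ℝ (Fin (d + 1)), Psi d 0 x = x) ∧
    (∀ x ∈ stdSimplex ℝ (Fin (d + 1)), Psi d 1 x = bary d) ∧
    -- (iii)
    (∀ s ∈ Set.Icc (0 : ℝ) 1, Psi d s (bary d) = bary d) ∧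
    -- (iv)
    (∀ s ∈ Set.Icc (0 : ℝ) 1, ∀ t ∈ Set.Icc (0 : ℝ) 1, ∀ x ∈ stdSimplex ℝ (Fin (d + 1)),
      Psi d s (Psi d t x) = Psi d (min (s + t) 1) x) ∧
    -- (v) Lipschitz with respect to the sum metric on [0,1] × Δ^d
    (∃ C : ℝ, ∀ s ∈ Set.Icc (0 : ℝ) 1, ∀ s' ∈ Set.Icc (0 : ℝ) 1,
      ∀ x ∈ stdSimplex ℝ (Fin (d + 1)), ∀ x' ∈ stdSimplex ℝ (Fin (d + 1)),
        en (Psi d s x - Psi d s' x') ≤ C * (|s - s'| + en (x - x'))) ∧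
    -- (vi)
    (∀ ε > (0 : ℝ), ∀ x ∈ stdSimplex ℝ (Fin (d + 1)),
      en (x - bary d) ≤ ε → Psi d (min 1 ε) x = bary d) := by
  refine ⟨fun s hs x hx => Psi_mem_stdSimplex hs.1 hx, fun x hx => en_sub_bary_le hx,
    sqrt_div_succ_lt_one, fun x _ => Psi_zero x,
    fun x hx => Psi_eq_bary (en_sub_bary_lt_one hx).le, fun s _ => Psi_bary s,
    fun s hs t ht x hx => ?_,
    ⟨3, fun s _ s' hs' x _ x' _ => en_Psi_sub_Psi_le hs'.1 x x'⟩,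
    fun ε _ x hx hε => Psi_eq_bary (le_min (en_sub_bary_lt_one hx).le hε)⟩
  rw [Psi_Psi hs.1 ht.1, Psi_min_of_en_le (en_sub_bary_lt_one hx).le]

end
end

section
/- Let G be a group and suppose given, for each n ∈ ℕ: a finite group F_n, a group epimorphism α_n : G → F_n, a set 𝒟_n of subgroups of F_n, and for each D ∈ 𝒟_n (writing D̄ := α_n⁻¹(D)): a homotopy coherent G-action (Γ_{n,D}, Z_{n,D}), a metric space (W_{n,D}, d_{n,D}) with an isometric D̄-action, and a D̄-equivariant map f_{n,D} : G × Z_{n,D} → W_{n,D}, where D̄ acts on G × Z_{n,D} by left multiplication on the first factor. Assume that for all k ∈ ℕ and all g_0,…,g_k ∈ G: sup_{D∈𝒟_n, γ∈G, (t_1,…,t_k)∈[0,1]^k, z∈Z_{n,D}} d_{n,D}( f_{n,D}(γ, Γ_{n,D}(g_k,t_k,…,t_1,g_0,z)), f_{n,D}(γ g_k⋯g_0, z) ) → 0 as n → ∞. Then: (a) the formula Γ'_{n,D}(g_k,t_k,…,t_1,g_0,(γD̄,z)) := (g_k⋯g_0 γ D̄, Γ_{n,D}(g_k,t_k,…,t_1,g_0,z))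 defines a homotopy coherent G-action on G/D̄ × Z_{n,D}; (b) the formula f'_{n,D}(γD̄,z) := [γ, f_{n,D}(γ⁻¹,z)] gives a well-defined map f'_{n,D} : G/D̄ × Z_{n,D} → G ×_{D̄} W_{n,D}; and (c) for all k ∈ ℕ and g_0,…,g_k ∈ G one has sup_{D∈𝒟_n, γD̄∈G/D̄, (t_1,…,t_k)∈[0,1]^k, z∈Z_{n,D}} d( f'_{n,D}(Γ'_{n,D}(g_k,t_k,…,t_1,g_0,(γD̄,z))), g_k⋯g_0 · f'_{n,D}(γD̄,z) ) → 0 as n → ∞, where both compared points lie in the same D̄-coset component of G ×_{D̄} W_{n,D}, so their distance is defined. -/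
open unitInterval

universe u v

namespace HCAction

variable {G : Type u} [Group G] [TopologicalSpace G] [DiscreteTopology G]

/-- The relation `(γ h, w) ∼ (γ, h • w)` (for `h ∈ D̄`) defining the induced space
`G ×_{D̄} W`. -/
def IndRel (Dbar : Subgroup G) (W : Type w) [MulAction ↥Dbar W] :
    G × W → G × W → Prop :=
  fun p q => ∃ h : ↥Dbar, p.1 = q.1 * (h : G) ∧ q.2 = h • p.2

/-- The induced space `G ×_{D̄} W`. -/
def IndSp (Dbar : Subgroup G) (W : Type w) [MulAction ↥Dbar W] : Type (max u w) :=
  Quot (IndRel Dbar W)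

/-- The class `[γ, w]` in `G ×_{D̄} W`. -/
def imk (Dbar : Subgroup G) (W : Type w) [MulAction ↥Dbar W] (p : G × W) :
    IndSp Dbar W :=
  Quot.mk _ p

end HCAction

/-!
The action on `G/D̄ × Z` is the product of the strict translation action on `G/D̄` with `Γ`;
its coherence relations reduce to identities for the products `g_k ⋯ g_0` (splitting off an
initial segment, merging two adjacent factors, dropping a unit factor). The map `f'` is well
defined by `D̄`-equivariance of `f`. In (c) both points lie in the component of
`g_k ⋯ g_0 γ D̄`, and since `γ⁻¹ = (g_k ⋯ g_0 γ)⁻¹ g_k ⋯ g_0` the distance to be bounded is the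
one in the hypothesis at the base point `(g_k ⋯ g_0 γ)⁻¹`.
-/

namespace HCAction

section ChainProd

variable {G : Type*} [Group G]

@[simp]
lemma chainProd_zero (gs : ℕ → G) : chainProd 0 gs = gs 0 := by
  simp [chainProd, List.range_succ]

lemma chainProd_succ (k : ℕ) (gs : ℕ → G) :
    chainProd (k + 1) gs = gs (k + 1) * chainProd k gs := by
  simp [chainProd, List.range_succ]

lemma chainProd_congr {k : ℕ} {gs gs' : ℕ → G} (h : ∀ n ≤ k, gs n = gs' n) :
    chainProd k gs = chainProd k gs' := by
  induction k with
  | zero => simp [h 0 le_rfl]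
  | succ k ih => rw [chainProd_succ, chainProd_succ, h _ le_rfl, ih fun n hn => h n (by omega)]

lemma chainProd_add (a m : ℕ) (gs : ℕ → G) :
    chainProd (a + 1 + m) gs = chainProd m (fun n => gs (n + (a + 1))) * chainProd a gs := by
  induction m with
  | zero => simp [chainProd_succ]
  | succ m ih =>
    rw [← add_assoc, chainProd_succ, ih, chainProd_succ, ← mul_assoc,
      show m + 1 + (a + 1) = a + 1 + m + 1 by omega]

lemma chainProd_merge {a k : ℕ} (h : a < k) (gs : ℕ → G) :
    chainProd (k - 1)
      (fun n => if n < a then gs n else if n = a then gs (a + 1) * gs a else gs (n + 1)) =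
    chainProd k gs := by
  obtain ⟨m, rfl⟩ := Nat.exists_eq_add_of_lt h
  clear h
  rw [Nat.add_sub_cancel]
  induction m with
  | zero =>
    cases a with
    | zero => simp [chainProd_succ]
    | succ b =>
      rw [Nat.add_zero, chainProd_succ, chainProd_succ, chainProd_succ,
        chainProd_congr fun n hn => if_pos (Nat.lt_succ_of_le hn)]
      simp [mul_assoc]
  | succ m ih =>
    rw [← add_assoc, chainProd_succ, ih, chainProd_succ (a + m + 1),
      if_neg (by omega), if_neg (by omega)]

lemma chainProd_erase {j k : ℕ} (h : j < k) (gs : ℕ → G) (hg : gs j = 1) :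
    chainProd (k - 1) (fun n => if n < j then gs n else gs (n + 1)) = chainProd k gs := by
  rw [← chainProd_merge h gs]
  congr 1
  funext n
  split_ifs <;> simp_all

end ChainProd

def prodLeft {G : Type*} [Group G] {Z : Type*} [TopologicalSpace Z] (A : HCAction G Z)
    (Q : Type*) [TopologicalSpace Q] [MulAction G Q] [ContinuousConstSMul G Q] :
    HCAction G (Q × Z) where
  Γ k gs ts p := (chainProd k gs • p.1, A.Γ k gs ts p.2)
  continuous k gs :=
    ((continuous_const_smul _).comp (continuous_fst.comp continuous_snd)).prodMk
      ((A.continuous k gs).comp (continuous_fst.prodMk (continuous_snd.comp continuous_snd)))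
  junk k gs gs' ts ts' p hg ht := by
    rw [chainProd_congr hg, A.junk k gs gs' ts ts' p.2 hg ht]
  rel_t0 k j gs ts p h1 h2 h0 := by
    obtain ⟨a, rfl⟩ := Nat.exists_eq_add_of_le' h1
    obtain ⟨m, rfl⟩ := Nat.exists_eq_add_of_le h2
    rw [A.rel_t0 _ _ gs ts p.2 h1 h2 h0, smul_smul, Nat.add_sub_cancel_left, Nat.add_sub_cancel,
      ← chainProd_add]
  rel_t1 k j gs ts p h1 h2 h0 := by
    obtain ⟨a, rfl⟩ := Nat.exists_eq_add_of_le' h1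
    rw [A.rel_t1 k _ gs ts p.2 h1 h2 h0, Nat.add_sub_cancel, chainProd_merge (by omega)]
  rel_g0 k gs ts p h1 hg := by
    obtain ⟨m, rfl⟩ := Nat.exists_eq_add_of_le h1
    have h := chainProd_add 0 m gs
    rw [zero_add, chainProd_zero, hg, mul_one] at h
    rw [A.rel_g0 _ gs ts p.2 h1 hg, h, Nat.add_sub_cancel_left]
  rel_gj k j gs ts p h1 h2 hg := by
    rw [A.rel_gj k j gs ts p.2 h1 h2 hg, chainProd_erase (by omega) gs hg]
  rel_gk k gs ts p h1 hg := by
    obtain ⟨m, rfl⟩ := Nat.exists_eq_add_of_le' h1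
    rw [A.rel_gk _ gs ts p.2 h1 hg, chainProd_succ, hg, one_mul, Nat.add_sub_cancel]
  unit gs ts p hg := by
    rw [chainProd_zero, hg, one_smul, A.unit gs ts p.2 hg]

section InducedSpace

variable {G : Type*} [Group G] {Dbar : Subgroup G} {W : Type*} [MulAction Dbar W]

instance : SMul G (IndSp Dbar W) where
  smul g := Quot.lift (fun p => imk Dbar W (g * p.1, p.2)) fun _ _ ⟨h, h1, h2⟩ =>
    Quot.sound ⟨h, by rw [h1, mul_assoc], h2⟩

lemma smul_imk (g γ : G) (w : W) : g • imk Dbar W (γ, w) = imk Dbar W (g * γ, w) := rfl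

variable {Z : Type*} {f : G × Z → W}

lemma imk_inv_eq_of_inv_mul_mem
    (hf : ∀ (h : Dbar) (γ : G) (z : Z), f ((h : G) * γ, z) = h • f (γ, z)) {γ γ' : G} (hγ : γ⁻¹ * γ' ∈ Dbar) (z : Z) :
    imk Dbar W (γ, f (γ⁻¹, z)) = imk Dbar W (γ', f (γ'⁻¹, z)) := by
  refine (Quot.sound ⟨⟨γ⁻¹ * γ', hγ⟩, (mul_inv_cancel_left γ γ').symm, ?_⟩).symm
  rw [← hf, Subgroup.coe_mk, mul_inv_cancel_right]

def inducedMap (hf : ∀ (h : Dbar) (γ : G) (z : Z), f ((h : G) * γ, z) = h • f (γ, z)) :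
    (G ⧸ Dbar) × Z → IndSp Dbar W :=
  fun p => Quotient.liftOn' p.1 (fun γ => imk Dbar W (γ, f (γ⁻¹, p.2)))
    fun _ _ hr => imk_inv_eq_of_inv_mul_mem hf (QuotientGroup.leftRel_apply.mp hr) p.2

lemma inducedMap_mk (hf : ∀ (h : Dbar) (γ : G) (z : Z), f ((h : G) * γ, z) = h • f (γ, z))
    (γ : G) (z : Z) : inducedMap hf (γ, z) = imk Dbar W (γ, f (γ⁻¹, z)) := rfl

end InducedSpace

variable {G : Type u} [Group G] [TopologicalSpace G] [DiscreteTopology G]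

theorem statement10_general
    -- finite groups `F_n` and epimorphisms `α_n : G → F_n`
    (F : ℕ → Type u) [∀ n, Group (F n)]
    (α : ∀ n, G →* F n)
    -- sets `𝒟_n` of subgroups of `F_n`
    (𝒟 : ∀ n, Set (Subgroup (F n)))
    -- homotopy coherent `G`-actions `(Γ_{n,D}, Z_{n,D})`
    (Z : ∀ n, Subgroup (F n) → Type v) [∀ n D, TopologicalSpace (Z n D)]
    (Γ : ∀ n D, HCAction G (Z n D))
    -- metric spaces `W_{n,D}` with isometric `D̄`-actions, `D̄ = α_n⁻¹(D)`
    (W : ∀ n, Subgroup (F n) → Type w)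
    [∀ n D, MetricSpace (W n D)]
    [inst : ∀ n (D : Subgroup (F n)), MulAction ↥(D.comap (α n)) (W n D)]
    -- `D̄`-equivariant maps `f_{n,D} : G × Z_{n,D} → W_{n,D}`
    (f : ∀ n D, G × Z n D → W n D)
    (hequi : ∀ n (D : Subgroup (F n)) (h : ↥(D.comap (α n))) (γ : G) (z : Z n D),
      f n D ((h : G) * γ, z) = h • f n D (γ, z))
    -- hypothesis: the almost-equivariance condition, uniformly in `D ∈ 𝒟_n` and `γ`
    (hconv : ∀ (k : ℕ) (gs : ℕ → G), ∀ ε > (0 : ℝ), ∃ N : ℕ, ∀ n ≥ N,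
      ∀ D ∈ 𝒟 n, ∀ (γ : G) (ts : ℕ → I) (z : Z n D),
        dist (f n D (γ, (Γ n D).Γ k gs ts z)) (f n D (γ * chainProd k gs, z)) ≤ ε) :
    ∃ (Γ' : ∀ n (D : Subgroup (F n)), HCAction G ((G ⧸ D.comap (α n)) × Z n D))
      (f' : ∀ n (D : Subgroup (F n)),
        (G ⧸ D.comap (α n)) × Z n D → IndSp (D.comap (α n)) (W n D))
      (act' : ∀ n (D : Subgroup (F n)),
        G → IndSp (D.comap (α n)) (W n D) → IndSp (D.comap (α n)) (W n D)),
      -- (a): the homotopy coherent action `Γ'` on `G/D̄ × Z` is given by the stated formula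
      (∀ n, ∀ D ∈ 𝒟 n, ∀ (k : ℕ) (gs : ℕ → G) (ts : ℕ → I) (c : G ⧸ D.comap (α n))
        (z : Z n D),
        (Γ' n D).Γ k gs ts (c, z) = (chainProd k gs • c, (Γ n D).Γ k gs ts z)) ∧
      -- (b): `f'(γ D̄, z) = [γ, f(γ⁻¹, z)]` is well defined
      (∀ n, ∀ D ∈ 𝒟 n, ∀ (γ : G) (z : Z n D),
        f' n D (↑γ, z) = imk (D.comap (α n)) (W n D) (γ, f n D (γ⁻¹, z))) ∧
      -- the `G`-action `g · [γ, w] = [g γ, w]` on `G ×_{D̄} W` is well defined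
      (∀ n, ∀ D ∈ 𝒟 n, ∀ (g γ : G) (w : W n D),
        act' n D g (imk (D.comap (α n)) (W n D) (γ, w)) =
          imk (D.comap (α n)) (W n D) (g * γ, w)) ∧
      -- (c): the almost-equivariance of the maps `f'`, where both compared points lie in the
      -- same component `{(g_k⋯g_0 γ)·D̄} ×_{D̄} W` so that their distance is computed on
      -- representatives with the common first coordinate `g_k⋯g_0 γ`
      (∀ (k : ℕ) (gs : ℕ → G), ∀ ε > (0 : ℝ), ∃ N : ℕ, ∀ n ≥ N,
        ∀ D ∈ 𝒟 n, ∀ (γ : G) (ts : ℕ → I) (z : Z n D),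
          f' n D ((Γ' n D).Γ k gs ts (↑γ, z)) =
            imk (D.comap (α n)) (W n D)
              (chainProd k gs * γ, f n D ((chainProd k gs * γ)⁻¹, (Γ n D).Γ k gs ts z)) ∧
          act' n D (chainProd k gs) (f' n D (↑γ, z)) =
            imk (D.comap (α n)) (W n D) (chainProd k gs * γ, f n D (γ⁻¹, z)) ∧
          dist (f n D ((chainProd k gs * γ)⁻¹, (Γ n D).Γ k gs ts z)) (f n D (γ⁻¹, z)) ≤ ε) := by
  refine ⟨fun n D => (Γ n D).prodLeft (G ⧸ D.comap (α n)), fun n D => inducedMap (hequi n D),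
    fun n D g x => g • x, fun _ _ _ _ _ _ _ _ => rfl, fun _ _ _ => inducedMap_mk _,
    fun _ _ _ => smul_imk, fun k gs ε hε => ?_⟩
  obtain ⟨N, hN⟩ := hconv k gs ε hε
  refine ⟨N, fun n hn D hD γ ts z => ⟨rfl, rfl, ?_⟩⟩
  simpa only [mul_inv_rev, inv_mul_cancel_right] using hN n hn D hD (chainProd k gs * γ)⁻¹ ts z

theorem statement10
    -- finite groups `F_n` and epimorphisms `α_n : G → F_n`
    (F : ℕ → Type u) [∀ n, Group (F n)] [∀ n, Finite (F n)]
    (α : ∀ n, G →* F n) (hα : ∀ n, Function.Surjective (α n))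
    -- sets `𝒟_n` of subgroups of `F_n`
    (𝒟 : ∀ n, Set (Subgroup (F n)))
    -- homotopy coherent `G`-actions `(Γ_{n,D}, Z_{n,D})`
    (Z : ∀ n, Subgroup (F n) → Type v) [∀ n D, TopologicalSpace (Z n D)]
    (Γ : ∀ n D, HCAction G (Z n D))
    -- metric spaces `W_{n,D}` with isometric `D̄`-actions, `D̄ = α_n⁻¹(D)`
    (W : ∀ n, Subgroup (F n) → Type w)
    [∀ n D, MetricSpace (W n D)]
    [inst : ∀ n (D : Subgroup (F n)), MulAction ↥(D.comap (α n)) (W n D)]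
    (hiso : ∀ n (D : Subgroup (F n)) (h : ↥(D.comap (α n))) (w w' : W n D),
      dist (h • w) (h • w') = dist w w')
    -- `D̄`-equivariant maps `f_{n,D} : G × Z_{n,D} → W_{n,D}`
    (f : ∀ n D, G × Z n D → W n D)
    (hequi : ∀ n (D : Subgroup (F n)) (h : ↥(D.comap (α n))) (γ : G) (z : Z n D),
      f n D ((h : G) * γ, z) = h • f n D (γ, z))
    -- hypothesis: the almost-equivariance condition, uniformly in `D ∈ 𝒟_n` and `γ`
    (hconv : ∀ (k : ℕ) (gs : ℕ → G), ∀ ε > (0 : ℝ), ∃ N : ℕ, ∀ n ≥ N,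
      ∀ D ∈ 𝒟 n, ∀ (γ : G) (ts : ℕ → I) (z : Z n D),
        dist (f n D (γ, (Γ n D).Γ k gs ts z)) (f n D (γ * chainProd k gs, z)) ≤ ε) :
    ∃ (Γ' : ∀ n (D : Subgroup (F n)), HCAction G ((G ⧸ D.comap (α n)) × Z n D))
      (f' : ∀ n (D : Subgroup (F n)),
        (G ⧸ D.comap (α n)) × Z n D → IndSp (D.comap (α n)) (W n D))
      (act' : ∀ n (D : Subgroup (F n)),
        G → IndSp (D.comap (α n)) (W n D) → IndSp (D.comap (α n)) (W n D)),
      -- (a): the homotopy coherent action `Γ'` on `G/D̄ × Z` is given by the stated formula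
      (∀ n, ∀ D ∈ 𝒟 n, ∀ (k : ℕ) (gs : ℕ → G) (ts : ℕ → I) (c : G ⧸ D.comap (α n))
        (z : Z n D),
        (Γ' n D).Γ k gs ts (c, z) = (chainProd k gs • c, (Γ n D).Γ k gs ts z)) ∧
      -- (b): `f'(γ D̄, z) = [γ, f(γ⁻¹, z)]` is well defined
      (∀ n, ∀ D ∈ 𝒟 n, ∀ (γ : G) (z : Z n D),
        f' n D (↑γ, z) = imk (D.comap (α n)) (W n D) (γ, f n D (γ⁻¹, z))) ∧
      -- the `G`-action `g · [γ, w] = [g γ, w]` on `G ×_{D̄} W` is well defined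
      (∀ n, ∀ D ∈ 𝒟 n, ∀ (g γ : G) (w : W n D),
        act' n D g (imk (D.comap (α n)) (W n D) (γ, w)) =
          imk (D.comap (α n)) (W n D) (g * γ, w)) ∧
      -- (c): the almost-equivariance of the maps `f'`, where both compared points lie in the
      -- same component `{(g_k⋯g_0 γ)·D̄} ×_{D̄} W` so that their distance is computed on
      -- representatives with the common first coordinate `g_k⋯g_0 γ`
      (∀ (k : ℕ) (gs : ℕ → G), ∀ ε > (0 : ℝ), ∃ N : ℕ, ∀ n ≥ N,
        ∀ D ∈ 𝒟 n, ∀ (γ : G) (ts : ℕ → I) (z : Z n D),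
          f' n D ((Γ' n D).Γ k gs ts (↑γ, z)) =
            imk (D.comap (α n)) (W n D)
              (chainProd k gs * γ, f n D ((chainProd k gs * γ)⁻¹, (Γ n D).Γ k gs ts z)) ∧
          act' n D (chainProd k gs) (f' n D (↑γ, z)) =
            imk (D.comap (α n)) (W n D) (chainProd k gs * γ, f n D (γ⁻¹, z)) ∧
          dist (f n D ((chainProd k gs * γ)⁻¹, (Γ n D).Γ k gs ts z)) (f n D (γ⁻¹, z)) ≤ ε) :=
  statement10_general F α 𝒟 Z Γ W (inst := inst) f hequi hconv

end HCAction
end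

section
/- Let φ : H → G be a group homomorphism, 𝓕 a family of subgroups of G, K and M cocomplete categories, F : K → M a functor preserving arbitrary coproducts, and D : BH → K a functor. Then the assembly map As_{φ*𝓕, FD_H} : colim_{H_{φ*𝓕}Orb} FD_H → FD_H(H/H) is isomorphic, as an object of the arrow category of M, to the assembly map As_{𝓕, F(Bφ_!D)_G} : colim_{G_𝓕Orb} F(Bφ_!D)_G → F(Bφ_!D)_G(G/G). -/
/-!
Statement 12: the assembly maps As_{φ*𝓕, FD_H} and As_{𝓕, F(Bφ_!D)_G} agree in the arrow category.

Throughout, `GOrb G` is the orbit category of the group `G` (objects: nonempty transitive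
`G`-sets; morphisms: equivariant maps), `GOrb.pt G` its terminal object `G/G`,
`SubgroupFamily G` the families of subgroups, `FamOrb G 𝓕` the full subcategory `G_𝓕Orb`,
`PSh G` the presheaf category, `asm` the assembly map, `jG : BG ⥤ GOrb` the canonical
inclusion (`BG = SingleObj G`), and left Kan extensions are encoded by a functor together
with a natural transformation exhibiting it as a left Kan extension
(`Functor.IsLeftKanExtension`).  Cocompleteness is expressed by `HasColimitsOfSize.{u, u+1}`,
the size of the orbit category and its subcategories.
-/

open CategoryTheory Limits

universe u v w v' w'

namespace FJ

variable (G : Type u) [Group G]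

/-- The orbit category of `G`: objects are (nonempty) transitive `G`-sets, morphisms are
`G`-equivariant maps. -/
structure GOrb : Type (u + 1) where
  α : Type u
  [act : MulAction G α]
  pretrans : MulAction.IsPretransitive G α
  nonempty : Nonempty α

attribute [instance] GOrb.act

variable {G}

/-- Equivariant maps of transitive `G`-sets. -/
@[ext]
structure OrbHom (X Y : GOrb G) : Type u where
  toFun : X.α → Y.α
  map_smul : ∀ (g : G) (x : X.α), toFun (g • x) = g • toFun x

instance : Category.{u} (GOrb G) where
  Hom X Y := OrbHom X Y
  id X := ⟨_root_.id, fun _ _ => rfl⟩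
  comp f g := ⟨g.toFun ∘ f.toFun, fun a x => by
    simp only [Function.comp_apply, f.map_smul, g.map_smul]⟩
  id_comp f := OrbHom.ext rfl
  comp_id f := OrbHom.ext rfl
  assoc f g h := OrbHom.ext rfl

variable (G)

/-- The one-point orbit `G/G`, the terminal object of the orbit category. -/
def GOrb.pt : GOrb G where
  α := PUnit
  pretrans := ⟨fun x y => ⟨1, Subsingleton.elim _ _⟩⟩
  nonempty := ⟨PUnit.unit⟩

variable {G}

/-- The unique morphism to the one-point orbit. -/
def toPt (X : GOrb G) : X ⟶ GOrb.pt G :=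
  ⟨fun _ => PUnit.unit, fun _ _ => rfl⟩

instance (X : GOrb G) : Subsingleton (X ⟶ GOrb.pt G) :=
  ⟨fun f g => OrbHom.ext (funext fun _ => rfl)⟩

variable (G)

/-- A family of subgroups of `G`: a nonempty collection of subgroups closed under conjugation
and under passing to subgroups. -/
structure SubgroupFamily where
  carrier : Set (Subgroup G)
  nonempty : carrier.Nonempty
  conj_mem : ∀ (H : Subgroup G) (g : G),
    H ∈ carrier → H.map (MulAut.conj g).toMonoidHom ∈ carrier
  le_mem : ∀ H K : Subgroup G, H ≤ K → K ∈ carrier → H ∈ carrier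

/-- The full subcategory `G_𝓕Orb` of orbits with stabilizers in the family `𝓕`. -/
abbrev FamOrb (𝓕 : SubgroupFamily G) : Type (u + 1) :=
  ObjectProperty.FullSubcategory (fun X : GOrb G => ∀ x : X.α, MulAction.stabilizer G x ∈ 𝓕.carrier)

/-- The category of `Set`-valued presheaves on the orbit category. -/
abbrev PSh := (GOrb G)ᵒᵖ ⥤ Type u

variable {G}

section Assembly

variable {M : Type v'} [Category.{w'} M]

/-- The cocone over `F` restricted to `G_𝓕Orb` with vertex `F(G/G)`. -/
def asmCocone (𝓕 : SubgroupFamily G) (F : GOrb G ⥤ M) :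
    Cocone (ObjectProperty.ι _ ⋙ F :
      FamOrb G 𝓕 ⥤ M) where
  pt := F.obj (GOrb.pt G)
  ι :=
    { app := fun X => F.map (toPt X.obj)
      naturality := fun X Y f => by
        dsimp
        rw [Category.comp_id, ← F.map_comp]
        exact congrArg F.map (Subsingleton.elim _ _) }

/-- The assembly map `colim_{G_𝓕Orb} F ⟶ F(G/G)`. -/
noncomputable def asm (𝓕 : SubgroupFamily G) (F : GOrb G ⥤ M)
    [HasColimit (ObjectProperty.ι _ ⋙ F : FamOrb G 𝓕 ⥤ M)] :
    colimit (ObjectProperty.ι _ ⋙ F : FamOrb G 𝓕 ⥤ M) ⟶ F.obj (GOrb.pt G) :=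
  colimit.desc _ (asmCocone 𝓕 F)

end Assembly

end FJ

namespace FJ

variable {G : Type u} [Group G]

variable (G) in
/-- The transitive `G`-set `G` (left translation). -/
@[reducible] def selfOrb : GOrb G where
  α := G
  pretrans := ⟨fun x y => ⟨y * x⁻¹, by simp [smul_eq_mul]⟩⟩
  nonempty := ⟨1⟩

/-- The group element underlying a morphism in `BG = SingleObj G`. -/
def un {x y : SingleObj G} (g : x ⟶ y) : G := g

variable (G) in
/-- Right multiplication by `g⁻¹`, as an equivariant self-map of the `G`-set `G`. -/
def rmul (g : G) : selfOrb G ⟶ selfOrb G :=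
  ⟨fun a => a * g⁻¹, fun h a => by simp [smul_eq_mul, mul_assoc]⟩

variable (G) in
/-- The canonical inclusion `j^G : BG ⟶ GOrb`, sending the unique object to the `G`-set `G`. -/
def jG : SingleObj G ⥤ GOrb G where
  obj _ := selfOrb G
  map g := rmul G (un g)
  map_id x := OrbHom.ext (funext fun a => by
    have h1 : un (𝟙 x) = 1 := rfl
    show a * (un (𝟙 x))⁻¹ = a
    rw [h1, inv_one, mul_one])
  map_comp {x y z} f g := OrbHom.ext (funext fun a => by
    have h1 : un (f ≫ g) = un g * un f := rfl
    show a * (un (f ≫ g))⁻¹ = (a * (un f)⁻¹) * (un g)⁻¹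
    rw [h1, mul_inv_rev, mul_assoc])

/-- The functor `Bφ : BH ⟶ BG` induced by a group homomorphism. -/
def Bhom {H : Type v} [Group H] (φ : H →* G) : SingleObj H ⥤ SingleObj G :=
  SingleObj.mapHom H G φ

/-- The family `φ*𝓕 = {K ≤ H ∣ φ(K) ∈ 𝓕}` induced by a group homomorphism. -/
def comapFam {H : Type v} [Group H] (φ : H →* G) (𝓕 : SubgroupFamily G) :
    SubgroupFamily H where
  carrier := {K : Subgroup H | K.map φ ∈ 𝓕.carrier}
  nonempty := by
    obtain ⟨S, hS⟩ := 𝓕.nonempty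
    refine ⟨⊥, ?_⟩
    have hbot : (⊥ : Subgroup H).map φ = ⊥ := by simp
    simp only [Set.mem_setOf_eq, hbot]
    exact 𝓕.le_mem ⊥ S bot_le hS
  conj_mem := fun K h hK => by
    simp only [Set.mem_setOf_eq]
    have heq : (K.map (MulAut.conj h).toMonoidHom).map φ =
        (K.map φ).map (MulAut.conj (φ h)).toMonoidHom := by
      rw [Subgroup.map_map, Subgroup.map_map]
      congr 1
      ext x
      simp [MulAut.conj]
    rw [heq]
    exact 𝓕.conj_mem _ (φ h) hK
  le_mem := fun K L h hL => 𝓕.le_mem _ _ (Subgroup.map_mono h) hL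

end FJ

namespace FJ

variable {G H : Type u} [Group G] [Group H]

/-- The relation defining `G ×_φ S`: `(g·φ(h), s) ∼ (g, h·s)`. -/
def indSetoid (φ : H →* G) (S : GOrb H) : Setoid (G × S.α) where
  r p q := ∃ h : H, p.1 = q.1 * φ h ∧ q.2 = h • p.2
  iseqv := by
    constructor
    · intro p
      exact ⟨1, by simp, by simp⟩
    · rintro p q ⟨h, h1, h2⟩
      refine ⟨h⁻¹, ?_, ?_⟩
      · rw [h1]; simp
      · rw [h2]; simp
    · rintro p q r ⟨h, h1, h2⟩ ⟨k, k1, k2⟩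
      refine ⟨k * h, ?_, ?_⟩
      · rw [h1, k1, map_mul, mul_assoc]
      · rw [k2, h2, mul_smul]

instance indAction (φ : H →* G) (S : GOrb H) : MulAction G (Quotient (indSetoid φ S)) where
  smul g := Quotient.map (fun p => (g * p.1, p.2))
    (by rintro p q ⟨h, h1, h2⟩; exact ⟨h, by dsimp only; rw [h1, mul_assoc], h2⟩)
  one_smul x := by
    induction x using Quotient.ind
    exact congrArg (Quotient.mk _) (by simp)
  mul_smul g g' x := by
    induction x using Quotient.ind
    exact congrArg (Quotient.mk _) (by simp [mul_assoc])

lemma indSmul_mk (φ : H →* G) (S : GOrb H) (g : G) (p : G × S.α) :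
    g • (Quotient.mk (indSetoid φ S) p) = Quotient.mk _ (g * p.1, p.2) := rfl

/-- The induced transitive `G`-set `G ×_φ S`. -/
def indObj (φ : H →* G) (S : GOrb H) : GOrb G where
  α := Quotient (indSetoid φ S)
  pretrans := by
    refine ⟨fun x y => ?_⟩
    induction x using Quotient.ind with | _ p =>
    induction y using Quotient.ind with | _ q =>
    obtain ⟨h, hh⟩ := S.pretrans.exists_smul_eq p.2 q.2
    refine ⟨(q.1 * φ h) * p.1⁻¹, ?_⟩
    rw [indSmul_mk]
    refine Quotient.sound ?_
    exact ⟨h, by dsimp only; rw [inv_mul_cancel_right], by dsimp only; rw [hh]⟩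
  nonempty := ⟨Quotient.mk _ (1, S.nonempty.some)⟩

/-- The induction functor on morphisms. -/
def indMap (φ : H →* G) {S T : GOrb H} (f : S ⟶ T) : indObj φ S ⟶ indObj φ T where
  toFun := Quotient.map (fun p => (p.1, f.toFun p.2))
    (by rintro p q ⟨h, h1, h2⟩; exact ⟨h, h1, by dsimp only; rw [h2, f.map_smul]⟩)
  map_smul := by
    rintro g ⟨p⟩
    rfl

/-- The induction functor `G ×_φ - : HOrb ⥤ GOrb` of a group homomorphism `φ : H → G`. -/
def indOrb (φ : H →* G) : GOrb H ⥤ GOrb G where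
  obj := indObj φ
  map := indMap φ
  map_id S := OrbHom.ext (funext (by rintro ⟨p⟩; rfl))
  map_comp f g := OrbHom.ext (funext (by rintro ⟨p⟩; rfl))

/-- The restriction functor `res_φ : PSh(GOrb) ⥤ PSh(HOrb)`, precomposition with the
induction functor. -/
def resPsh (φ : H →* G) : PSh G ⥤ PSh H :=
  (Functor.whiskeringLeft (GOrb H)ᵒᵖ (GOrb G)ᵒᵖ (Type u)).obj (indOrb φ).op

end FJ

namespace FJ

variable {G : Type u} [Group G] {M : Type v'} [Category.{w'} M]

/-- The relative assembly map
`colim_{G_{𝓕'}Orb} F ⟶ colim_{G_𝓕Orb} F` induced by an inclusion `𝓕' ⊆ 𝓕` of families. -/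
noncomputable def relAsm (𝓕' 𝓕 : SubgroupFamily G)
    (hsub : ∀ S : Subgroup G, S ∈ 𝓕'.carrier → S ∈ 𝓕.carrier) (F : GOrb G ⥤ M)
    [HasColimit (ObjectProperty.ι _ ⋙ F : FamOrb G 𝓕' ⥤ M)]
    [HasColimit (ObjectProperty.ι _ ⋙ F : FamOrb G 𝓕 ⥤ M)] :
    colimit (ObjectProperty.ι _ ⋙ F : FamOrb G 𝓕' ⥤ M) ⟶
      colimit (ObjectProperty.ι _ ⋙ F : FamOrb G 𝓕 ⥤ M) :=
  colimit.desc _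
    { pt := colimit (ObjectProperty.ι _ ⋙ F : FamOrb G 𝓕 ⥤ M)
      ι :=
        { app := fun X => colimit.ι (ObjectProperty.ι _ ⋙ F : FamOrb G 𝓕 ⥤ M)
            ⟨X.obj, fun x => hsub _ (X.property x)⟩
          naturality := fun X Y f => by
            dsimp
            rw [Category.comp_id]
            exact colimit.w (ObjectProperty.ι _ ⋙ F : FamOrb G 𝓕 ⥤ M)
              (show (⟨X.obj, fun x => hsub _ (X.property x)⟩ : FamOrb G 𝓕) ⟶
                ⟨Y.obj, fun x => hsub _ (Y.property x)⟩ from ObjectProperty.homMk f.hom) } }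

end FJ

/-!
For `T` in `G_𝓕Orb`, the comma category `Bφ ⋙ j^G ↓ T` computing `(Bφ_!D)_G(T)` is the action
groupoid of `H` acting on `T` through `φ`, which splits into its `H`-orbits; each orbit `H·t` is a
transitive `H`-set with stabilizers in `φ*𝓕`, and its part of the groupoid is `j^H ↓ H·t`. Hence
`(Bφ_!D)_G(T) ≅ ∐_{H·t ⊆ T} D_H(H·t)`, which (since `F` preserves coproducts) says that
`F(Bφ_!D)_G` restricted to `G_𝓕Orb` is the pointwise left Kan extension of `FD_H` restricted to
`H_{φ*𝓕}Orb` along induction `G ×_φ -`. Left Kan extensions preserve colimits, which identifies the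
two sources; the two targets are both `colim D`, because `G/G` and `H/H` are terminal.
-/

namespace FJ

section Terminal

variable {C₁ C₂ A : Type*} [Category C₁] [Category C₂] [Category A] {L : C₁ ⥤ C₂}
  {F : C₁ ⥤ A} {F' : C₂ ⥤ A} (α : F ⟶ L ⋙ F') [F'.IsLeftKanExtension α] [HasColimit F]
  {t : C₂} (ht : IsTerminal t)

noncomputable def colimitIsoObjOfIsTerminal : colimit F ≅ F'.obj t :=
  (F'.isColimitCoconeOfIsLeftKanExtension α (colimit.isColimit F)).coconePointUniqueUpToIso
    (colimitOfDiagramTerminal ht F')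

lemma ι_colimitIsoObjOfIsTerminal_hom (x : C₁) :
    colimit.ι F x ≫ (colimitIsoObjOfIsTerminal α ht).hom =
      α.app x ≫ F'.map (ht.from (L.obj x)) := by
  have hfac : α.app x ≫ (F'.coconeOfIsLeftKanExtension α (colimit.cocone F)).ι.app (L.obj x) =
      colimit.ι F x :=
    F'.descOfIsLeftKanExtension_fac_app α _ _ x
  rw [← hfac]
  exact (Category.assoc _ _ _).trans
    (congrArg (α.app x ≫ ·) (IsColimit.comp_coconePointUniqueUpToIso_hom _ _ _))

end Terminal

def isTerminalPt {G : Type u} [Group G] : IsTerminal (GOrb.pt G) :=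
  IsTerminal.ofUniqueHom toPt fun _ _ => Subsingleton.elim _ _

section Induction

variable {H G : Type u} [Group H] [Group G] (φ : H →* G)

def selfOrbToInd : selfOrb G ⟶ indObj φ (selfOrb H) where
  toFun g := Quotient.mk _ (g, (1 : H))
  map_smul _ _ := rfl

def jGToInd : Bhom φ ⋙ jG G ⟶ jG H ⋙ indOrb φ where
  app _ := selfOrbToInd φ
  naturality _ _ h := by
    apply OrbHom.ext
    funext g
    refine Quotient.sound ⟨(un h)⁻¹, ?_, ?_⟩
    · rw [map_inv]; rfl
    · show (1 : H) * (un h)⁻¹ = (un h)⁻¹ • (1 : H)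
      rw [smul_eq_mul, mul_one, one_mul]

lemma stabilizer_indObj_mk {S : GOrb H} (g : G) (s : S.α) :
    MulAction.stabilizer G (Quotient.mk (indSetoid φ S) (g, s)) =
      ((MulAction.stabilizer H s).map φ).map (MulAut.conj g).toMonoidHom := by
  ext g'
  simp only [MulAction.mem_stabilizer_iff, Subgroup.mem_map]
  constructor
  · intro h
    rw [indSmul_mk] at h
    obtain ⟨k, hk1, hk2⟩ := Quotient.exact h
    refine ⟨φ k, ⟨k, hk2.symm, rfl⟩, ?_⟩
    dsimp at hk1 ⊢
    rw [← hk1]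
    group
  · rintro ⟨x, ⟨k, hk, rfl⟩, rfl⟩
    rw [indSmul_mk]
    refine Quotient.sound ⟨k, ?_, hk.symm⟩
    dsimp
    group

lemma stabilizer_indObj_mem (𝓕 : SubgroupFamily G) {S : GOrb H}
    (hS : ∀ s : S.α, MulAction.stabilizer H s ∈ (comapFam φ 𝓕).carrier)
    (x : (indObj φ S).α) : MulAction.stabilizer G x ∈ 𝓕.carrier := by
  induction x using Quotient.ind with | _ p =>
  obtain ⟨g, s⟩ := p
  have hmem := 𝓕.conj_mem _ g (hS s)
  rw [← stabilizer_indObj_mk] at hmem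
  exact hmem

def famInd (𝓕 : SubgroupFamily G) : FamOrb H (comapFam φ 𝓕) ⥤ FamOrb G 𝓕 where
  obj S := ⟨indObj φ S.obj, stabilizer_indObj_mem φ 𝓕 S.property⟩
  map f := ObjectProperty.homMk (indMap φ f.hom)
  map_id S := ObjectProperty.hom_ext _ ((indOrb φ).map_id S.obj)
  map_comp f g := ObjectProperty.hom_ext _ ((indOrb φ).map_comp f.hom g.hom)

end Induction

section Orbits

variable {H G : Type u} [Group H] [Group G] (φ : H →* G) (T : GOrb G)

def orbitRel : Setoid T.α where
  r x y := ∃ h : H, x = φ h • y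
  iseqv :=
    { refl _ := ⟨1, by simp⟩
      symm := fun ⟨h, e⟩ => ⟨h⁻¹, by rw [e, map_inv, inv_smul_smul]⟩
      trans := fun ⟨h, e⟩ ⟨k, e'⟩ => ⟨h * k, by rw [e, e', map_mul, mul_smul]⟩ }

def Orbits : Type u := Quotient (orbitRel φ T)

def orbitOf (t : T.α) : Orbits φ T := Quotient.mk (orbitRel φ T) t

lemma orbitOf_smul (h : H) (t : T.α) : orbitOf φ T (φ h • t) = orbitOf φ T t :=
  Quotient.sound ⟨h, rfl⟩

instance (ω : Orbits φ T) : MulAction H {x : T.α // orbitOf φ T x = ω} where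
  smul h x := ⟨φ h • x.1, (orbitOf_smul φ T h x.1).trans x.2⟩
  one_smul x := Subtype.ext (show φ 1 • x.1 = x.1 by simp)
  mul_smul h k x := Subtype.ext
    (show φ (h * k) • x.1 = φ h • (φ k • x.1) by rw [map_mul, mul_smul])

def orbitOrb (ω : Orbits φ T) : GOrb H where
  α := {x : T.α // orbitOf φ T x = ω}
  pretrans := ⟨fun x y => by
    obtain ⟨h, e⟩ := Quotient.exact (x.2.trans y.2.symm)
    refine ⟨h⁻¹, Subtype.ext ?_⟩
    show φ h⁻¹ • x.1 = y.1
    rw [e, map_inv, inv_smul_smul]⟩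
  nonempty := by
    obtain ⟨t, ht⟩ := Quotient.exists_rep ω
    exact ⟨⟨t, ht⟩⟩

lemma orbitOrb_smul_val (ω : Orbits φ T) (h : H) (x : (orbitOrb φ T ω).α) :
    (h • x).1 = φ h • x.1 := rfl

lemma stabilizer_orbitOrb_mem (𝓕 : SubgroupFamily G)
    (hT : ∀ t : T.α, MulAction.stabilizer G t ∈ 𝓕.carrier) (ω : Orbits φ T)
    (x : (orbitOrb φ T ω).α) : MulAction.stabilizer H x ∈ (comapFam φ 𝓕).carrier := by
  refine 𝓕.le_mem _ (MulAction.stabilizer G x.1) ?_ (hT x.1)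
  rintro - ⟨h, hh, rfl⟩
  exact congrArg Subtype.val hh

def evalInd (ω : Orbits φ T) : indObj φ (orbitOrb φ T ω) ⟶ T where
  toFun := Quotient.lift (fun p : G × (orbitOrb φ T ω).α => p.1 • p.2.1) (by
    rintro ⟨g, x⟩ ⟨g', x'⟩ ⟨h, h1, h2⟩
    dsimp at h1 h2 ⊢
    rw [h1, h2, orbitOrb_smul_val, mul_smul])
  map_smul g x := by
    induction x using Quotient.ind with | _ p =>
    show (g * p.1) • p.2.1 = g • (p.1 • p.2.1)
    rw [mul_smul]

def orbitMap (ω : Orbits φ T) (t : T.α) (e : orbitOf φ T t = ω) :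
    selfOrb H ⟶ orbitOrb φ T ω where
  toFun a := ⟨φ a • t, by rw [← e]; exact orbitOf_smul φ T a t⟩
  map_smul h a := Subtype.ext (by
    show φ (h * a) • t = φ h • (φ a • t)
    rw [map_mul, mul_smul])

lemma orbitMap_eq {ω : Orbits φ T} (g : selfOrb H ⟶ orbitOrb φ T ω) {t : T.α}
    (ht : t = (g.toFun 1).1) (e : orbitOf φ T t = ω) : orbitMap φ T ω t e = g := by
  subst ht
  apply OrbHom.ext
  funext a
  apply Subtype.ext
  show φ a • (g.toFun 1).1 = (g.toFun a).1
  have := g.map_smul a 1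
  rw [smul_eq_mul, mul_one] at this
  rw [this]
  rfl

lemma selfOrbToInd_indMap_orbitMap_evalInd (f : selfOrb G ⟶ T) (ω : Orbits φ T)
    (e : orbitOf φ T (f.toFun 1) = ω) :
    selfOrbToInd φ ≫ indMap φ (orbitMap φ T ω (f.toFun 1) e) ≫ evalInd φ T ω = f := by
  apply OrbHom.ext
  funext g
  show g • (φ (1 : H) • f.toFun 1) = f.toFun g
  rw [map_one, one_smul, ← f.map_smul, smul_eq_mul, mul_one]

end Orbits

section Finality

variable {H G : Type u} [Group H] [Group G] (φ : H →* G) (𝓕 : SubgroupFamily G)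
  (T : FamOrb G 𝓕)

def orbitArrow (ω : Orbits φ T.obj) : CostructuredArrow (famInd φ 𝓕) T :=
  CostructuredArrow.mk
    (show (famInd φ 𝓕).obj ⟨orbitOrb φ T.obj ω, stabilizer_orbitOrb_mem φ T.obj 𝓕 T.property ω⟩ ⟶ T
      from ObjectProperty.homMk (evalInd φ T.obj ω))

def orbitArrows : Discrete (Orbits φ T.obj) ⥤ CostructuredArrow (famInd φ 𝓕) T :=
  Discrete.functor (orbitArrow φ 𝓕 T)

/-- The point of `T` hit by `[1, s]`, for `s` in the source of an arrow `G ×_φ S ⟶ T`. -/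
def arrowVal (d : CostructuredArrow (famInd φ 𝓕) T) (s : d.left.obj.α) : T.obj.α :=
  d.hom.hom.toFun (Quotient.mk (indSetoid φ d.left.obj) ((1 : G), s))

lemma arrowVal_smul (d : CostructuredArrow (famInd φ 𝓕) T) (h : H) (s : d.left.obj.α) :
    arrowVal φ 𝓕 T d (h • s) = φ h • arrowVal φ 𝓕 T d s := by
  show d.hom.hom.toFun (Quotient.mk (indSetoid φ d.left.obj) ((1 : G), h • s)) =
    φ h • d.hom.hom.toFun (Quotient.mk (indSetoid φ d.left.obj) ((1 : G), s))
  erw [← d.hom.hom.map_smul]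
  congr 1
  erw [indSmul_mk]
  refine Quotient.sound ⟨h⁻¹, ?_, (inv_smul_smul h s).symm⟩
  rw [map_inv]
  group

lemma orbitOf_arrowVal (d : CostructuredArrow (famInd φ 𝓕) T) (s s' : d.left.obj.α) :
    orbitOf φ T.obj (arrowVal φ 𝓕 T d s) = orbitOf φ T.obj (arrowVal φ 𝓕 T d s') := by
  obtain ⟨h, rfl⟩ := d.left.obj.pretrans.exists_smul_eq s' s
  rw [arrowVal_smul]
  exact orbitOf_smul φ T.obj h _

def arrowValHom (d : CostructuredArrow (famInd φ 𝓕) T) (ω : Orbits φ T.obj)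
    (hω : ∀ s, orbitOf φ T.obj (arrowVal φ 𝓕 T d s) = ω) :
    d.left.obj ⟶ orbitOrb φ T.obj ω where
  toFun s := ⟨arrowVal φ 𝓕 T d s, hω s⟩
  map_smul h s := Subtype.ext (arrowVal_smul φ 𝓕 T d h s)

def toOrbitArrow (d : CostructuredArrow (famInd φ 𝓕) T) (ω : Orbits φ T.obj)
    (hω : ∀ s, orbitOf φ T.obj (arrowVal φ 𝓕 T d s) = ω) :
    d ⟶ (orbitArrows φ 𝓕 T).obj ⟨ω⟩ :=
  CostructuredArrow.homMk (ObjectProperty.homMk (arrowValHom φ 𝓕 T d ω hω)) (by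
    apply ObjectProperty.hom_ext
    apply OrbHom.ext
    funext x
    induction x using Quotient.ind with | _ p =>
    obtain ⟨g, s⟩ := p
    show g • arrowVal φ 𝓕 T d s = d.hom.hom.toFun (Quotient.mk (indSetoid φ d.left.obj) (g, s))
    erw [← d.hom.hom.map_smul, indSmul_mk, mul_one])

lemma left_hom_val_eq_arrowVal (d : CostructuredArrow (famInd φ 𝓕) T) (ω : Orbits φ T.obj)
    (m : d ⟶ (orbitArrows φ 𝓕 T).obj ⟨ω⟩) (s : d.left.obj.α) :
    (m.left.hom.toFun s).1 = arrowVal φ 𝓕 T d s := by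
  have hw := congrFun (congrArg (fun f => OrbHom.toFun f.hom) (CostructuredArrow.w m))
    (Quotient.mk (indSetoid φ d.left.obj) ((1 : G), s))
  show (m.left.hom.toFun s).1 = d.hom.hom.toFun (Quotient.mk _ ((1 : G), s))
  rw [← hw]
  exact (one_smul G _).symm

lemma eq_orbitOf_arrowVal_of_hom (d : CostructuredArrow (famInd φ 𝓕) T) {ω : Orbits φ T.obj}
    (m : d ⟶ (orbitArrows φ 𝓕 T).obj ⟨ω⟩) (s : d.left.obj.α) :
    ω = orbitOf φ T.obj (arrowVal φ 𝓕 T d s) := by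
  rw [← left_hom_val_eq_arrowVal φ 𝓕 T d ω m s]
  exact (m.left.hom.toFun s).2.symm

/-- The comma category `famInd ↓ T` is the disjoint union of contractible pieces, one for each
`H`-orbit of `T`. -/
instance final_orbitArrows : (orbitArrows φ 𝓕 T).Final := by
  constructor
  intro d
  obtain ⟨s₀⟩ := d.left.obj.nonempty
  have : Nonempty (StructuredArrow d (orbitArrows φ 𝓕 T)) :=
    ⟨StructuredArrow.mk (toOrbitArrow φ 𝓕 T d _ (fun s => orbitOf_arrowVal φ 𝓕 T d s s₀))⟩
  apply zigzag_isConnected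
  rintro ⟨⟨⟨⟩⟩, ⟨ωX⟩, mX⟩ ⟨⟨⟨⟩⟩, ⟨ωY⟩, mY⟩
  obtain rfl := eq_orbitOf_arrowVal_of_hom φ 𝓕 T d mX s₀
  obtain rfl := eq_orbitOf_arrowVal_of_hom φ 𝓕 T d mY s₀
  obtain rfl : mX = mY := by
    apply CostructuredArrow.hom_ext
    apply ObjectProperty.hom_ext
    apply OrbHom.ext
    funext s
    apply Subtype.ext
    rw [left_hom_val_eq_arrowVal φ 𝓕 T d _ mX s, left_hom_val_eq_arrowVal φ 𝓕 T d _ mY s]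
  rfl

end Finality

section OrbitCoproduct

variable {H G : Type u} [Group H] [Group G] (φ : H →* G) {K : Type v} [Category.{w} K]
  {D : SingleObj H ⥤ K} {DH : GOrb H ⥤ K} (αD : D ⟶ jG H ⋙ DH)
  {E : GOrb G ⥤ K} (δ : D ⟶ (Bhom φ ⋙ jG G) ⋙ E) (T : GOrb G)

section Legs

variable {X : K} (c : ∀ ω : Orbits φ T, DH.obj (orbitOrb φ T ω) ⟶ X)

def orbitLeg (ω : Orbits φ T) (t : T.α) (e : orbitOf φ T t = ω) (x : SingleObj H) :
    D.obj x ⟶ X :=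
  αD.app x ≫ DH.map (orbitMap φ T ω t e) ≫ c ω

lemma orbitLeg_congr {ω ω' : Orbits φ T} (hω : ω = ω') (t : T.α) (e : orbitOf φ T t = ω)
    (e' : orbitOf φ T t = ω') (x : SingleObj H) :
    orbitLeg φ αD T c ω t e x = orbitLeg φ αD T c ω' t e' x := by
  subst hω; rfl

lemma map_comp_orbitLeg (ω : Orbits φ T) (t : T.α) {x y : SingleObj H} (h : x ⟶ y)
    (e : orbitOf φ T t = ω) (e' : orbitOf φ T ((φ (un h))⁻¹ • t) = ω) :
    D.map h ≫ orbitLeg φ αD T c ω t e y = orbitLeg φ αD T c ω ((φ (un h))⁻¹ • t) e' x := by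
  have hmap : rmul H (un h) ≫ orbitMap φ T ω t e = orbitMap φ T ω ((φ (un h))⁻¹ • t) e' := by
    apply OrbHom.ext
    funext a
    apply Subtype.ext
    show φ (a * (un h)⁻¹) • t = φ a • ((φ (un h))⁻¹ • t)
    rw [map_mul, map_inv, mul_smul]
  unfold orbitLeg
  erw [← hmap, DH.map_comp, ← Category.assoc, αD.naturality h]
  simp only [Category.assoc]
  rfl

lemma apply_one_of_costructuredArrow_hom {g g' : CostructuredArrow (Bhom φ ⋙ jG G) T}
    (ψ : g ⟶ g') : g.hom.toFun (1 : G) = (φ (un ψ.left))⁻¹ • g'.hom.toFun (1 : G) := by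
  rw [← CostructuredArrow.w ψ]
  show g'.hom.toFun ((1 : G) * (φ (un ψ.left))⁻¹) = _
  erw [← g'.hom.map_smul, smul_eq_mul, one_mul, mul_one]

def arrowCocone : Cocone (CostructuredArrow.proj (Bhom φ ⋙ jG G) T ⋙ D) where
  pt := X
  ι :=
    { app g := orbitLeg φ αD T c _ (g.hom.toFun (1 : G)) rfl g.left
      naturality g g' ψ := by
        have e' : orbitOf φ T ((φ (un ψ.left))⁻¹ • g'.hom.toFun (1 : G)) =
            orbitOf φ T (g'.hom.toFun (1 : G)) := by
          rw [← map_inv]; exact orbitOf_smul φ T _ _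
        dsimp
        rw [Category.comp_id, apply_one_of_costructuredArrow_hom φ T ψ,
          orbitLeg_congr φ αD T c e' _ rfl e']
        exact map_comp_orbitLeg φ αD T c _ _ ψ.left rfl e' }

lemma arrowCocone_ι_app_mk {x : SingleObj H} (f : (Bhom φ ⋙ jG G).obj x ⟶ T) (ω : Orbits φ T)
    (e : orbitOf φ T (f.toFun (1 : G)) = ω) :
    (arrowCocone φ αD T c).ι.app (CostructuredArrow.mk f) =
      αD.app x ≫ DH.map (orbitMap φ T ω (f.toFun (1 : G)) e) ≫ c ω :=
  orbitLeg_congr φ αD T c e _ rfl e x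

end Legs

variable [DH.IsLeftKanExtension αD]

noncomputable def indComparison : DH ⟶ indOrb φ ⋙ E :=
  DH.descOfIsLeftKanExtension αD (indOrb φ ⋙ E) (δ ≫ Functor.whiskerRight (jGToInd φ) E)

lemma app_comp_indComparison_app (x : SingleObj H) :
    αD.app x ≫ (indComparison φ αD δ).app (selfOrb H) = δ.app x ≫ E.map (selfOrbToInd φ) :=
  DH.descOfIsLeftKanExtension_fac_app αD _ _ x

lemma app_comp_map_comp_indComparison_app {S : GOrb H} (f : selfOrb H ⟶ S) (x : SingleObj H) :
    αD.app x ≫ DH.map f ≫ (indComparison φ αD δ).app S =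
      δ.app x ≫ E.map (selfOrbToInd φ ≫ indMap φ f) := by
  have hnat : DH.map f ≫ (indComparison φ αD δ).app S =
      (indComparison φ αD δ).app (selfOrb H) ≫ E.map (indMap φ f) :=
    (indComparison φ αD δ).naturality f
  erw [hnat, ← Category.assoc, app_comp_indComparison_app, Category.assoc, E.map_comp]
  rfl

lemma app_map_eq_orbitMap_indComparison_evalInd (f : selfOrb G ⟶ T) (ω : Orbits φ T)
    (e : orbitOf φ T (f.toFun 1) = ω) (x : SingleObj H) :
    δ.app x ≫ E.map f =
      αD.app x ≫ DH.map (orbitMap φ T ω (f.toFun 1) e) ≫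
        (indComparison φ αD δ).app (orbitOrb φ T ω) ≫ E.map (evalInd φ T ω) := by
  calc δ.app x ≫ E.map f
      = δ.app x ≫ E.map (selfOrbToInd φ ≫ indMap φ (orbitMap φ T ω (f.toFun 1) e)) ≫
          E.map (evalInd φ T ω) := by
        erw [← E.map_comp, Category.assoc, selfOrbToInd_indMap_orbitMap_evalInd]
    _ = _ := by
        have h := app_comp_map_comp_indComparison_app φ αD δ (orbitMap φ T ω (f.toFun 1) e) x
        simp only [← Category.assoc] at h ⊢
        exact congrArg (· ≫ E.map (evalInd φ T ω)) h.symm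

noncomputable def orbitCofan : Cofan fun ω : Orbits φ T => DH.obj (orbitOrb φ T ω) :=
  Cofan.mk (E.obj T) fun ω => (indComparison φ αD δ).app _ ≫ E.map (evalInd φ T ω)

variable [HasColimitsOfSize.{u, u} K] [E.IsLeftKanExtension δ]

noncomputable def isColimitOrbitCofan : IsColimit (orbitCofan φ αD δ T) := by
  have hE := Functor.isPointwiseLeftKanExtensionOfIsLeftKanExtension E δ T
  have hDH := Functor.isPointwiseLeftKanExtensionOfIsLeftKanExtension DH αD
  refine Cofan.IsColimit.mk _ (fun s => hE.desc (arrowCocone φ αD T s.inj)) ?_ ?_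
  · intro s ω
    apply (hDH (orbitOrb φ T ω)).hom_ext
    intro g
    let f : (Bhom φ ⋙ jG G).obj g.left ⟶ T := selfOrbToInd φ ≫ indMap φ g.hom ≫ evalInd φ T ω
    have hf : f.toFun (1 : G) = (g.hom.toFun (1 : H)).1 := one_smul G _
    have e : orbitOf φ T (f.toFun (1 : G)) = ω := hf ▸ (g.hom.toFun (1 : H)).2
    have hmap : orbitMap φ T ω (f.toFun (1 : G)) e = g.hom := orbitMap_eq φ T g.hom hf e
    have key := app_map_eq_orbitMap_indComparison_evalInd φ αD δ T f ω e g.left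
    rw [hmap] at key
    have hfac : (δ.app g.left ≫ E.map f) ≫ hE.desc (arrowCocone φ αD T s.inj) =
        αD.app g.left ≫ DH.map g.hom ≫ s.inj ω := by
      have h := hE.fac (arrowCocone φ αD T s.inj) (CostructuredArrow.mk f)
      rwa [arrowCocone_ι_app_mk φ αD T s.inj f ω e, hmap] at h
    show (αD.app g.left ≫ DH.map g.hom) ≫
        ((indComparison φ αD δ).app _ ≫ E.map (evalInd φ T ω)) ≫
          hE.desc (arrowCocone φ αD T s.inj) = (αD.app g.left ≫ DH.map g.hom) ≫ s.inj ω
    exact (Category.assoc _ _ _).symm.trans ((congrArg (· ≫ _)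
      ((Category.assoc _ _ _).trans key.symm)).trans (hfac.trans (Category.assoc _ _ _).symm))
  · intro s m hm
    refine hE.uniq (arrowCocone φ αD T s.inj) m (fun g => ?_)
    have key := app_map_eq_orbitMap_indComparison_evalInd φ αD δ T g.hom _ rfl g.left
    have hm' : (indComparison φ αD δ).app _ ≫ E.map (evalInd φ T _) ≫ m = s.inj _ :=
      (Category.assoc _ _ _).symm.trans (hm (orbitOf φ T (g.hom.toFun (1 : G))))
    refine (congrArg (· ≫ m) key).trans ?_
    erw [Category.assoc, Category.assoc, Category.assoc, hm']
    rfl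

end OrbitCoproduct

section Assembly

variable {H G : Type u} [Group H] [Group G] (φ : H →* G) {K : Type v} [Category.{w} K]
  {M : Type v'} [Category.{w'} M] (F : K ⥤ M) (𝓕 : SubgroupFamily G)
  {D : SingleObj H ⥤ K} {DH : GOrb H ⥤ K} (αD : D ⟶ jG H ⋙ DH) [DH.IsLeftKanExtension αD]
  {E : GOrb G ⥤ K} (δ : D ⟶ (Bhom φ ⋙ jG G) ⋙ E)

noncomputable def famIndComparison :
    (ObjectProperty.ι _ ⋙ DH ⋙ F : FamOrb H (comapFam φ 𝓕) ⥤ M) ⟶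
      famInd φ 𝓕 ⋙ (ObjectProperty.ι _ ⋙ E ⋙ F : FamOrb G 𝓕 ⥤ M) where
  app S := F.map ((indComparison φ αD δ).app S.obj)
  naturality S S' f := by
    dsimp
    erw [← F.map_comp, ← F.map_comp, (indComparison φ αD δ).naturality f.hom]
    rfl

variable [HasColimitsOfSize.{u, u} K] [E.IsLeftKanExtension δ]
  [∀ J : Type u, PreservesColimitsOfShape (Discrete J) F]

noncomputable def isPointwiseLeftKanExtensionFamIndComparison :
    (Functor.LeftExtension.mk _ (famIndComparison φ F 𝓕 αD δ)).IsPointwiseLeftKanExtension := by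
  intro T
  apply (Functor.Final.isColimitWhiskerEquiv (orbitArrows φ 𝓕 T) _).toFun
  refine IsColimit.equivOfNatIsoOfIso
    (F := Discrete.functor fun ω => F.obj (DH.obj (orbitOrb φ T.obj ω)))
    (G := orbitArrows φ 𝓕 T ⋙ CostructuredArrow.proj (famInd φ 𝓕) T ⋙ ObjectProperty.ι _ ⋙ DH ⋙ F)
    (Discrete.natIso fun _ => Iso.refl _) _ _ ?_
    (isColimitCofanMkObjOfIsColimit F _ _ (isColimitOrbitCofan φ αD δ T.obj))
  exact Cocone.ext (Iso.refl _) fun _ =>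
    (Category.comp_id _).trans ((Category.id_comp _).trans (F.map_comp _ _))

instance isLeftKanExtension_famIndComparison :
    (ObjectProperty.ι _ ⋙ E ⋙ F : FamOrb G 𝓕 ⥤ M).IsLeftKanExtension
      (famIndComparison φ F 𝓕 αD δ) :=
  (isPointwiseLeftKanExtensionFamIndComparison φ F 𝓕 αD δ).isLeftKanExtension

end Assembly

section Comparison

variable {H G : Type u} [Group H] [Group G] (φ : H →* G) {K : Type v} [Category.{w} K]
  {D : SingleObj H ⥤ K} {DH : GOrb H ⥤ K} (αD : D ⟶ jG H ⋙ DH) [DH.IsLeftKanExtension αD]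
  {E : GOrb G ⥤ K} (δ : D ⟶ (Bhom φ ⋙ jG G) ⋙ E)

noncomputable def ptComparison : DH.obj (GOrb.pt H) ⟶ E.obj (GOrb.pt G) :=
  (indComparison φ αD δ).app (GOrb.pt H) ≫ E.map (toPt _)

lemma map_comp_ptComparison {S : GOrb H} (f : S ⟶ GOrb.pt H) :
    DH.map f ≫ ptComparison φ αD δ = (indComparison φ αD δ).app S ≫ E.map (toPt _) := by
  have hnat : DH.map f ≫ (indComparison φ αD δ).app (GOrb.pt H) =
      (indComparison φ αD δ).app S ≫ E.map ((indOrb φ).map f) :=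
    (indComparison φ αD δ).naturality f
  rw [ptComparison, ← Category.assoc, hnat, Category.assoc, ← E.map_comp]
  exact congrArg (fun f => _ ≫ E.map f) (Subsingleton.elim _ _)

lemma isIso_ptComparison [HasColimit D] [E.IsLeftKanExtension δ] :
    IsIso (ptComparison φ αD δ) := by
  have hcomp : (colimitIsoObjOfIsTerminal αD isTerminalPt).hom ≫ ptComparison φ αD δ =
      (colimitIsoObjOfIsTerminal δ isTerminalPt).hom := by
    refine colimit.hom_ext fun x => ?_
    rw [← Category.assoc, ι_colimitIsoObjOfIsTerminal_hom, ι_colimitIsoObjOfIsTerminal_hom,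
      Category.assoc, map_comp_ptComparison]
    erw [← Category.assoc, app_comp_indComparison_app, Category.assoc, ← E.map_comp]
    exact congrArg (fun f => _ ≫ E.map f) (Subsingleton.elim _ _)
  have : IsIso ((colimitIsoObjOfIsTerminal αD isTerminalPt).hom ≫ ptComparison φ αD δ) := by
    rw [hcomp]; infer_instance
  exact IsIso.of_isIso_comp_left (colimitIsoObjOfIsTerminal αD isTerminalPt).hom _

variable {M : Type v'} [Category.{w'} M] [HasColimitsOfSize.{u, u + 1} M] (F : K ⥤ M)
  (𝓕 : SubgroupFamily G) [HasColimitsOfSize.{u, u} K] [E.IsLeftKanExtension δ]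
  [∀ J : Type u, PreservesColimitsOfShape (Discrete J) F]

lemma colimitIsoOfIsLeftKanExtension_inv_comp_asm :
    ((ObjectProperty.ι _ ⋙ E ⋙ F : FamOrb G 𝓕 ⥤ M).colimitIsoOfIsLeftKanExtension
        (famIndComparison φ F 𝓕 αD δ)).inv ≫ asm 𝓕 (E ⋙ F) =
      asm (comapFam φ 𝓕) (DH ⋙ F) ≫ F.map (ptComparison φ αD δ) := by
  refine colimit.hom_ext fun S => ?_
  rw [Functor.ι_colimitIsoOfIsLeftKanExtension_inv_assoc]
  erw [asm, asm, colimit.ι_desc, colimit.ι_desc_assoc]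
  show F.map ((indComparison φ αD δ).app S.obj) ≫ F.map (E.map (toPt _)) =
    F.map (DH.map (toPt S.obj)) ≫ F.map (ptComparison φ αD δ)
  rw [← F.map_comp, ← F.map_comp, map_comp_ptComparison]

end Comparison

/-- for a group homomorphism `φ : H → G` and a family `𝓕` of subgroups of `G`,
the assembly map `As_{φ*𝓕, FD_H}` is isomorphic in the arrow category to the assembly map
`As_{𝓕, F(Bφ_!D)_G}`. -/
theorem statement12 {H G : Type u} [Group H] [Group G] (φ : H →* G)
    (𝓕 : SubgroupFamily G)
    {K : Type v} [Category.{w} K] [HasColimitsOfSize.{u, u + 1} K]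
    {M : Type v'} [Category.{w'} M] [HasColimitsOfSize.{u, u + 1} M]
    (F : K ⥤ M) [∀ J : Type u, PreservesColimitsOfShape (Discrete J) F]
    (D : SingleObj H ⥤ K)
    -- `D_H`: a left Kan extension of `D` along `j^H`
    (DH : GOrb H ⥤ K) (αD : D ⟶ jG H ⋙ DH) [DH.IsLeftKanExtension αD]
    -- `Bφ_!D`: a left Kan extension of `D` along `Bφ`
    (Dphi : SingleObj G ⥤ K) (β : D ⟶ Bhom φ ⋙ Dphi) [Dphi.IsLeftKanExtension β]
    -- `(Bφ_!D)_G`: a left Kan extension of `Bφ_!D` along `j^G`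
    (DphiG : GOrb G ⥤ K) (γ : Dphi ⟶ jG G ⋙ DphiG) [DphiG.IsLeftKanExtension γ] :
    Nonempty (Arrow.mk (asm (comapFam φ 𝓕) (DH ⋙ F)) ≅ Arrow.mk (asm 𝓕 (DphiG ⋙ F))) := by
  have : HasColimitsOfSize.{u, u} K := hasColimitsOfSizeShrink.{u, u, u, u + 1} K
  have : HasColimitsOfSize.{u, 0} K := hasColimitsOfSizeShrink.{u, 0, u, u + 1} K
  let δ : D ⟶ (Bhom φ ⋙ jG G) ⋙ DphiG := β ≫ Functor.whiskerLeft (Bhom φ) γ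
  have : DphiG.IsLeftKanExtension δ :=
    (Functor.isLeftKanExtension_iff_postcompose β _ (Iso.refl _) γ δ).mp inferInstance
  have := isIso_ptComparison φ αD δ
  exact ⟨Arrow.isoMk
    ((Functor.colimitIsoOfIsLeftKanExtension _ (famIndComparison φ F 𝓕 αD δ)).symm)
    (F.mapIso (asIso (ptComparison φ αD δ)))
    (colimitIsoOfIsLeftKanExtension_inv_comp_asm φ αD δ F 𝓕)⟩

end FJ
end

section
/- Let H be a subgroup of a group G with inclusion ι : H → G, let K and M be cocomplete categories, F : K → M a functor, and C : BG → K a functor. Then there is a natural isomorphism F_{res^G_H C} ≅ F_C ∘ ind_ι of functors PSh(HOrb) → M, where res^G_H C := C ∘ Bι. -/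
/-!
Statement 14: natural isomorphism F_{res^G_H C} ≅ F_C ∘ ind_ι.

Throughout, `GOrb G` is the orbit category of the group `G` (objects: nonempty transitive
`G`-sets; morphisms: equivariant maps), `GOrb.pt G` its terminal object `G/G`,
`SubgroupFamily G` the families of subgroups, `FamOrb G 𝓕` the full subcategory `G_𝓕Orb`,
`PSh G` the presheaf category, `asm` the assembly map, `jG : BG ⥤ GOrb` the canonical
inclusion (`BG = SingleObj G`), and left Kan extensions are encoded by a functor together
with a natural transformation exhibiting it as a left Kan extension
(`Functor.IsLeftKanExtension`).  Cocompleteness is expressed by `HasColimitsOfSize.{u, u+1}`,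
the size of the orbit category and its subcategories.
-/

open CategoryTheory Limits

universe u v w v' w'

/-!
Both sides are left Kan extensions of `(res^G_H C)_H ⋙ F` along the Yoneda embedding of `HOrb`,
because colimit-preserving functors out of presheaf categories are left Kan extensions of their
restriction to representables. The only input from group theory is that induction identifies
`(res^G_H C)_H` with `C_G ∘ (G ×_H −)`: for an `H`-orbit `S`, the comma category `j^H ↓ S` is
equivalent to `j^G ↓ (G ×_H S)`, so the pointwise colimits computing both Kan extensions agree.
-/

open CategoryTheory.Functor

namespace CategoryTheory

section KanExtension

universe u₁ u₂ u₃ u₄ u₅ v₁ v₂ v₃ v₄ v₅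

variable {C : Type u₁} [Category.{v₁} C] {E : Type u₂} [Category.{v₂} E]

theorem Presheaf.isLeftKanExtension_yoneda_of_preservesColimits {A : C ⥤ E}
    (L : (Cᵒᵖ ⥤ Type v₁) ⥤ E) (e : A ≅ yoneda ⋙ L)
    [PreservesColimitsOfSize.{v₁, max u₁ v₁} L] : L.IsLeftKanExtension e.hom :=
  LeftExtension.IsPointwiseLeftKanExtension.isLeftKanExtension (E := .mk _ e.hom) fun P =>
    ((IsColimit.precomposeHomEquiv (isoWhiskerLeft (CostructuredArrow.proj yoneda P) e) _).symm
      (isColimitOfPreserves L (Presheaf.isColimitTautologicalCocone P))).ofIsoColimit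
      (Cocone.ext (Iso.refl _) fun _ => Category.comp_id _)

variable {D : Type u₃} [Category.{v₃} D] {C' : Type u₄} [Category.{v₄} C']
  {D' : Type u₅} [Category.{v₅} D'] {L : C ⥤ D} {L' : C' ⥤ D'} {P : C' ⥤ C} {Q : D' ⥤ D}

/-- Beck–Chevalley for pointwise left Kan extensions. -/
noncomputable def Functor.LeftExtension.IsPointwiseLeftKanExtension.baseChange
    (e : P ⋙ L ⟶ L' ⋙ Q) [∀ Y, (CostructuredArrow.map₂ e (𝟙 (Q.obj Y))).Final]
    {F : C ⥤ E} {F' : D ⥤ E} {α : F ⟶ L ⋙ F'}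
    (h : (LeftExtension.mk F' α).IsPointwiseLeftKanExtension) :
    (LeftExtension.mk (Q ⋙ F')
      (whiskerLeft P α ≫ whiskerRight e F')).IsPointwiseLeftKanExtension := fun Y =>
  ((Final.isColimitWhiskerEquiv (CostructuredArrow.map₂ e (𝟙 (Q.obj Y))) _).symm
    (h (Q.obj Y))).ofIsoColimit <| Cocone.ext (Iso.refl _) fun _ => by
      dsimp [LeftExtension.coconeAt, LeftExtension.mk]
      rw [Category.comp_id, Category.comp_id, F'.map_comp]
      exact (Category.assoc _ _ _).symm

end KanExtension

end CategoryTheory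

namespace FJ

section Induction

variable {G : Type u} [Group G]

def selfOrbHom {S : GOrb G} (s : S.α) : selfOrb G ⟶ S :=
  ⟨fun g => g • s, fun g g' => mul_smul g g' s⟩

theorem toFun_selfOrb_eq_smul {S : GOrb G} (f : selfOrb G ⟶ S) (g : G) :
    f.toFun g = g • f.toFun 1 := by
  simpa using f.map_smul g 1

theorem indMk_mul_smul {H : Type u} [Group H] (φ : H →* G) (S : GOrb H) (g : G) (h : H)
    (s : S.α) : Quotient.mk (indSetoid φ S) (g * φ h, s) = Quotient.mk _ (g, h • s) :=
  Quotient.sound ⟨h, rfl, rfl⟩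

variable (H : Subgroup G)

def selfOrbIsoInd : selfOrb G ≅ (indOrb H.subtype).obj (selfOrb H) where
  hom := ⟨fun g => Quotient.mk _ (g, 1), fun _ _ => rfl⟩
  inv := ⟨Quotient.lift (fun p => p.1 * p.2) (by
      rintro p q ⟨h, hpq, hqp⟩
      simp [hpq, hqp, smul_eq_mul, mul_assoc]), by
    rintro g ⟨p⟩
    exact mul_assoc g p.1 p.2⟩
  hom_inv_id := OrbHom.ext (funext fun g => mul_one g)
  inv_hom_id := OrbHom.ext (funext (by
    rintro ⟨g, h⟩
    show Quotient.mk _ (g * H.subtype h, 1) = Quotient.mk _ (g, h)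
    rw [indMk_mul_smul, smul_eq_mul, mul_one]))

def jGIndOrbIso : Bhom H.subtype ⋙ jG G ≅ jG H ⋙ indOrb H.subtype :=
  NatIso.ofComponents (fun _ => selfOrbIsoInd H) fun h => OrbHom.ext (funext fun (g : G) => by
    show Quotient.mk _ (g * H.subtype (un h)⁻¹, 1) = Quotient.mk _ (g, 1 * (un h)⁻¹)
    rw [indMk_mul_smul, smul_eq_mul, mul_one, one_mul])

instance : (Bhom H.subtype).Faithful where
  map_injective h := H.subtype_injective h

variable (S : GOrb H)

abbrev indCostructuredArrow :
    CostructuredArrow (jG H) S ⥤ CostructuredArrow (jG G) ((indOrb H.subtype).obj S) :=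
  CostructuredArrow.map₂ (jGIndOrbIso H).hom (𝟙 _)

instance : (indCostructuredArrow H S).Full where
  map_surjective {f f'} u := by
    -- evaluating the triangle of `u` at `1` shows that `u` is an element of `H`
    have hw := congrFun (congrArg OrbHom.toFun (CostructuredArrow.w u)) (1 : G)
    obtain ⟨h, hg, hs⟩ := Quotient.exact hw
    have hu : (1 : G) * (un u.left)⁻¹ = 1 * H.subtype h := hg
    rw [one_mul, one_mul] at hu
    refine ⟨CostructuredArrow.homMk (SingleObj.toEnd H (h⁻¹))
      (OrbHom.ext (funext fun (x : H) => ?_)), ?_⟩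
    · show f'.hom.toFun (x * h⁻¹⁻¹) = f.hom.toFun x
      rw [inv_inv, toFun_selfOrb_eq_smul f'.hom, toFun_selfOrb_eq_smul f.hom, mul_smul, ← hs]
    · refine CostructuredArrow.hom_ext _ _ ?_
      show H.subtype h⁻¹ = un u.left
      rw [_root_.map_inv, ← hu, inv_inv]

instance : (indCostructuredArrow H S).EssSurj where
  mem_essImage Y := by
    obtain ⟨⟨g, s⟩, hgs⟩ := Quotient.exists_rep (Y.hom.toFun (1 : G))
    refine ⟨CostructuredArrow.mk (Y := SingleObj.star H) (selfOrbHom s),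
      ⟨CostructuredArrow.isoMk (asIso (SingleObj.toEnd G g))
        (OrbHom.ext (funext fun (x : G) => ?_))⟩⟩
    show Y.hom.toFun (x * g⁻¹) = Quotient.mk _ (x, (1 : H) • s)
    refine (toFun_selfOrb_eq_smul Y.hom (x * g⁻¹)).trans ?_
    rw [← hgs, one_smul]
    exact congrArg (Quotient.mk _) (by simp)

instance : (indCostructuredArrow H S).IsEquivalence where

end Induction

theorem statement14_general {G : Type u} [Group G] (H : Subgroup G)
    {K : Type v} [Category.{w} K] [HasColimitsOfSize.{u, u + 1} K]
    {M : Type v'} [Category.{w'} M]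
    (F : K ⥤ M)
    (C : SingleObj G ⥤ K)
    -- `C_G`: a left Kan extension of `C` along `j^G`
    (CG : GOrb G ⥤ K) (α : C ⟶ jG G ⋙ CG) [CG.IsLeftKanExtension α]
    -- `F_C`: the colimit-preserving extension of `FC_G = F ∘ C_G` along the Yoneda embedding
    (FC : PSh G ⥤ M) [PreservesColimitsOfSize.{u, u + 1} FC]
    (eC : yoneda ⋙ FC ≅ CG ⋙ F)
    -- `(res^G_H C)_H`: a left Kan extension of `res^G_H C = C ∘ Bι` along `j^H`
    (CH : GOrb ↥H ⥤ K) (αH : Bhom H.subtype ⋙ C ⟶ jG ↥H ⋙ CH) [CH.IsLeftKanExtension αH]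
    -- `F_{res^G_H C}`
    (FCH : PSh ↥H ⥤ M) [PreservesColimitsOfSize.{u, u + 1} FCH]
    (eH : yoneda ⋙ FCH ≅ CH ⋙ F)
    -- `ind_ι`: the colimit-preserving extension of presheaf induction,
    -- with `ind_ι ∘ yo_H ≅ yo_G ∘ (G ×_ι −)`
    (ind : PSh ↥H ⥤ PSh G) [PreservesColimitsOfSize.{u, u + 1} ind]
    (eInd : (yoneda : GOrb ↥H ⥤ PSh ↥H) ⋙ ind ≅ indOrb H.subtype ⋙ yoneda) :
    Nonempty (FCH ≅ ind ⋙ FC) := by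
  -- the comma categories `j^G ↓ Y` are `u`-small
  have : HasColimitsOfSize.{u, u} K := hasColimitsOfSizeShrink.{u, u, u, u + 1} K
  have : (jG G).HasPointwiseLeftKanExtension C := fun _ => inferInstance
  let β := whiskerLeft (Bhom H.subtype) α ≫ whiskerRight (jGIndOrbIso H).hom CG
  have : (indOrb H.subtype ⋙ CG).IsLeftKanExtension β :=
    (LeftExtension.IsPointwiseLeftKanExtension.baseChange (jGIndOrbIso H).hom
      (isPointwiseLeftKanExtensionOfIsLeftKanExtension CG α)).isLeftKanExtension
  let eCH : CH ≅ indOrb H.subtype ⋙ CG := leftKanExtensionUnique CH αH _ β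
  let eCHF : CH ⋙ F ≅ yoneda ⋙ ind ⋙ FC :=
    isoWhiskerRight eCH F ≪≫ isoWhiskerLeft (indOrb H.subtype) eC.symm ≪≫
      isoWhiskerRight eInd.symm FC
  have := Presheaf.isLeftKanExtension_yoneda_of_preservesColimits FCH eH.symm
  have := Presheaf.isLeftKanExtension_yoneda_of_preservesColimits (ind ⋙ FC) eCHF
  exact ⟨leftKanExtensionUnique FCH eH.symm.hom (ind ⋙ FC) eCHF.hom⟩

/-- for a subgroup `H ≤ G` and coefficients `C : BG ⥤ K`, there is a natural
isomorphism `F_{res^G_H C} ≅ F_C ∘ ind_ι` of functors `PSh(HOrb) ⥤ M`, where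
`res^G_H C = C ∘ Bι` and `ind_ι` is the colimit-preserving extension of `yo_G ∘ (G ×_ι −)`. -/
theorem statement14 {G : Type u} [Group G] (H : Subgroup G)
    {K : Type v} [Category.{w} K] [HasColimitsOfSize.{u, u + 1} K]
    {M : Type v'} [Category.{w'} M] [HasColimitsOfSize.{u, u + 1} M]
    (F : K ⥤ M)
    (C : SingleObj G ⥤ K)
    -- `C_G`: a left Kan extension of `C` along `j^G`
    (CG : GOrb G ⥤ K) (α : C ⟶ jG G ⋙ CG) [CG.IsLeftKanExtension α]
    -- `F_C`: the colimit-preserving extension of `FC_G = F ∘ C_G` along the Yoneda embedding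
    (FC : PSh G ⥤ M) [PreservesColimitsOfSize.{u, u + 1} FC]
    (eC : yoneda ⋙ FC ≅ CG ⋙ F)
    -- `(res^G_H C)_H`: a left Kan extension of `res^G_H C = C ∘ Bι` along `j^H`
    (CH : GOrb ↥H ⥤ K) (αH : Bhom H.subtype ⋙ C ⟶ jG ↥H ⋙ CH) [CH.IsLeftKanExtension αH]
    -- `F_{res^G_H C}`
    (FCH : PSh ↥H ⥤ M) [PreservesColimitsOfSize.{u, u + 1} FCH]
    (eH : yoneda ⋙ FCH ≅ CH ⋙ F)
    -- `ind_ι`: the colimit-preserving extension of presheaf induction,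
    -- with `ind_ι ∘ yo_H ≅ yo_G ∘ (G ×_ι −)`
    (ind : PSh ↥H ⥤ PSh G) [PreservesColimitsOfSize.{u, u + 1} ind]
    (eInd : (yoneda : GOrb ↥H ⥤ PSh ↥H) ⋙ ind ≅ indOrb H.subtype ⋙ yoneda) :
    Nonempty (FCH ≅ ind ⋙ FC) :=
  statement14_general H F C CG α FC eC CH αH FCH eH ind eInd

end FJ
end
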